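/- arXiv:2009.00218 — 9 statements merged into one kernel-verified Lean document; each statement's English description precedes it below -/
import Mathlib

section
/- The translation (−)^# of MS4 into MS4.t is full and faithful: for every formula φ of the language L□∀, MS4 ⊢ φ if and only if MS4.t ⊢ φ^#. -/
/-- Formulas of the bimodal language `L□∀` with modalities `□` and `∀`. -/
inductive BForm : Type
  | var : Nat → BForm
  | bot : BForm
  | and : BForm → BForm → BForm
  | or  : BForm → BForm → BForm
  | imp : BForm → BForm → BForm
  | box : BForm → BForm
  | all : BForm → BForm

def BForm.neg (φ : BForm) : BForm := φ.imp BForm.bot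
def BForm.iff (φ ψ : BForm) : BForm := (φ.imp ψ).and (ψ.imp φ)
/-- `◇φ := ¬□¬φ`. -/
def BForm.dia (φ : BForm) : BForm := ((φ.neg).box).neg
/-- `∃φ := ¬∀¬φ`. -/
def BForm.ex (φ : BForm) : BForm := ((φ.neg).all).neg

/-- The monadic S4 logic `MS4`: classical propositional logic with S4-axioms for
`□`, S5-axioms for `∀`, and the left commutativity axiom `□∀p → ∀□p`, closed
under modus ponens, `□`-necessitation and `∀`-necessitation (axioms are given
as schemes, hence closure under uniform substitution is automatic). -/
inductive MS4 : BForm → Prop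
  -- classical propositional axioms
  | a1 (φ ψ : BForm) : MS4 (φ.imp (ψ.imp φ))
  | a2 (φ ψ χ : BForm) : MS4 ((φ.imp (ψ.imp χ)).imp ((φ.imp ψ).imp (φ.imp χ)))
  | a3 (φ ψ : BForm) : MS4 ((φ.and ψ).imp φ)
  | a4 (φ ψ : BForm) : MS4 ((φ.and ψ).imp ψ)
  | a5 (φ ψ : BForm) : MS4 (φ.imp (ψ.imp (φ.and ψ)))
  | a6 (φ ψ : BForm) : MS4 (φ.imp (φ.or ψ))
  | a7 (φ ψ : BForm) : MS4 (ψ.imp (φ.or ψ))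
  | a8 (φ ψ χ : BForm) : MS4 ((φ.imp χ).imp ((ψ.imp χ).imp ((φ.or ψ).imp χ)))
  | a9 (φ : BForm) : MS4 (BForm.bot.imp φ)
  | dne (φ : BForm) : MS4 ((φ.neg.neg).imp φ)
  -- S4-axioms for □
  | boxK (φ ψ : BForm) : MS4 (((φ.imp ψ).box).imp ((φ.box).imp ψ.box))
  | boxT (φ : BForm) : MS4 ((φ.box).imp φ)
  | box4 (φ : BForm) : MS4 ((φ.box).imp φ.box.box)
  -- S5-axioms for ∀
  | allK (φ ψ : BForm) : MS4 (((φ.imp ψ).all).imp ((φ.all).imp ψ.all))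
  | allT (φ : BForm) : MS4 ((φ.all).imp φ)
  | all4 (φ : BForm) : MS4 ((φ.all).imp φ.all.all)
  | allB (φ : BForm) : MS4 (φ.imp (φ.ex.all))
  -- left commutativity axiom
  | comm (φ : BForm) : MS4 ((φ.all.box).imp (φ.box.all))
  -- rules
  | mp (φ ψ : BForm) : MS4 (φ.imp ψ) → MS4 φ → MS4 ψ
  | necBox (φ : BForm) : MS4 φ → MS4 φ.box
  | necAll (φ : BForm) : MS4 φ → MS4 φ.all

/-- Formulas of the language `L_T∀` with modalities `□_F`, `□_P`, `∀`. -/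
inductive AForm : Type
  | var : Nat → AForm
  | bot : AForm
  | and : AForm → AForm → AForm
  | or  : AForm → AForm → AForm
  | imp : AForm → AForm → AForm
  | boxF : AForm → AForm
  | boxP : AForm → AForm
  | fa   : AForm → AForm

def AForm.neg (φ : AForm) : AForm := φ.imp AForm.bot
def AForm.iff (φ ψ : AForm) : AForm := (φ.imp ψ).and (ψ.imp φ)
/-- `◇_F φ := ¬□_F¬φ`. -/
def AForm.diaF (φ : AForm) : AForm := ((φ.neg).boxF).neg
/-- `◇_P φ := ¬□_P¬φ`. -/
def AForm.diaP (φ : AForm) : AForm := ((φ.neg).boxP).neg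
/-- `∃φ := ¬∀¬φ`. -/
def AForm.exq (φ : AForm) : AForm := ((φ.neg).fa).neg

/-- The tense `MS4` logic `MS4.t`: classical logic with S4-axioms for `□_F` and
`□_P`, the tense axioms `p → □_P◇_F p` and `p → □_F◇_P p`, the S5-axioms for
`∀`, and the left commutativity axiom `□_F∀p → ∀□_F p`, closed under modus
ponens and the three necessitation rules (axioms are given as schemes, hence
closure under uniform substitution is automatic). -/
inductive MS4t : AForm → Prop
  -- classical propositional axioms
  | a1 (φ ψ : AForm) : MS4t (φ.imp (ψ.imp φ))
  | a2 (φ ψ χ : AForm) : MS4t ((φ.imp (ψ.imp χ)).imp ((φ.imp ψ).imp (φ.imp χ)))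
  | a3 (φ ψ : AForm) : MS4t ((φ.and ψ).imp φ)
  | a4 (φ ψ : AForm) : MS4t ((φ.and ψ).imp ψ)
  | a5 (φ ψ : AForm) : MS4t (φ.imp (ψ.imp (φ.and ψ)))
  | a6 (φ ψ : AForm) : MS4t (φ.imp (φ.or ψ))
  | a7 (φ ψ : AForm) : MS4t (ψ.imp (φ.or ψ))
  | a8 (φ ψ χ : AForm) : MS4t ((φ.imp χ).imp ((ψ.imp χ).imp ((φ.or ψ).imp χ)))
  | a9 (φ : AForm) : MS4t (AForm.bot.imp φ)
  | dne (φ : AForm) : MS4t ((φ.neg.neg).imp φ)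
  -- S4-axioms for □_F
  | bFK (φ ψ : AForm) : MS4t (((φ.imp ψ).boxF).imp ((φ.boxF).imp ψ.boxF))
  | bFT (φ : AForm) : MS4t ((φ.boxF).imp φ)
  | bF4 (φ : AForm) : MS4t ((φ.boxF).imp φ.boxF.boxF)
  -- S4-axioms for □_P
  | bPK (φ ψ : AForm) : MS4t (((φ.imp ψ).boxP).imp ((φ.boxP).imp ψ.boxP))
  | bPT (φ : AForm) : MS4t ((φ.boxP).imp φ)
  | bP4 (φ : AForm) : MS4t ((φ.boxP).imp φ.boxP.boxP)
  -- tense axioms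
  | tense1 (φ : AForm) : MS4t (φ.imp ((φ.diaF).boxP))
  | tense2 (φ : AForm) : MS4t (φ.imp ((φ.diaP).boxF))
  -- S5-axioms for ∀
  | faK (φ ψ : AForm) : MS4t (((φ.imp ψ).fa).imp ((φ.fa).imp ψ.fa))
  | faT (φ : AForm) : MS4t ((φ.fa).imp φ)
  | fa4 (φ : AForm) : MS4t ((φ.fa).imp φ.fa.fa)
  | faB (φ : AForm) : MS4t (φ.imp (φ.exq.fa))
  -- left commutativity axiom
  | comm (φ : AForm) : MS4t ((φ.fa.boxF).imp (φ.boxF.fa))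
  -- rules
  | mp (φ ψ : AForm) : MS4t (φ.imp ψ) → MS4t φ → MS4t ψ
  | necF (φ : AForm) : MS4t φ → MS4t φ.boxF
  | necP (φ : AForm) : MS4t φ → MS4t φ.boxP
  | necFa (φ : AForm) : MS4t φ → MS4t φ.fa

/-- The translation `(−)^# : L□∀ → L_T∀` replacing every `□` by `□_F`. -/
def sharp : BForm → AForm
  | .var n => AForm.var n
  | .bot => AForm.bot
  | .and φ ψ => (sharp φ).and (sharp ψ)
  | .or φ ψ => (sharp φ).or (sharp ψ)
  | .imp φ ψ => (sharp φ).imp (sharp ψ)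
  | .box φ => (sharp φ).boxF
  | .all φ => (sharp φ).fa

/-!
The easy direction holds because every axiom and rule of `MS4` is, after `(−)^#`, an axiom or
rule of `MS4.t`. For the converse, take the canonical model of `MS4`: maximal consistent sets,
with `R` the canonical `□`-relation and `E` the relation of having the same `∀`-formulas. Reading
`□_P` along the converse of `R` makes it a model of `MS4.t`, since the tense axioms hold for any
relation and its converse. The only axiom that needs work is left commutativity, i.e. the frame
condition `E ∘ R ⊆ R ∘ E`: given `E Γ Δ` and `R Δ Θ`, the set `{ψ | □ψ ∈ Γ}` together with the
formulas of `Θ` that are equivalent to their own `∀`-closure is consistent, and any maximal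
extension of it is `R`-above `Γ` and `E`-equivalent to `Θ`. By the truth lemma, `φ^#` holds at a
maximal consistent set exactly when `φ` belongs to it, so a theorem of `MS4.t` of the form `φ^#`
comes from an `φ` lying in every maximal consistent set, which is then a theorem of `MS4`.
-/

theorem MS4t_sharp_of_MS4 {φ : BForm} (h : MS4 φ) : MS4t (sharp φ) := by
  induction h with
  | a1 => exact MS4t.a1 _ _
  | a2 => exact MS4t.a2 _ _ _
  | a3 => exact MS4t.a3 _ _
  | a4 => exact MS4t.a4 _ _
  | a5 => exact MS4t.a5 _ _
  | a6 => exact MS4t.a6 _ _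
  | a7 => exact MS4t.a7 _ _
  | a8 => exact MS4t.a8 _ _ _
  | a9 => exact MS4t.a9 _
  | dne => exact MS4t.dne _
  | boxK => exact MS4t.bFK _ _
  | boxT => exact MS4t.bFT _
  | box4 => exact MS4t.bF4 _
  | allK => exact MS4t.faK _ _
  | allT => exact MS4t.faT _
  | all4 => exact MS4t.fa4 _
  | allB => exact MS4t.faB _
  | comm => exact MS4t.comm _
  | mp _ _ _ _ ih₁ ih₂ => exact MS4t.mp _ _ ih₁ ih₂
  | necBox _ _ ih => exact MS4t.necF _ ih
  | necAll _ _ ih => exact MS4t.necFa _ ih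

namespace MS4

theorem imp_self (φ : BForm) : MS4 (φ.imp φ) :=
  mp _ _ (mp _ _ (a2 φ (φ.imp φ) φ) (a1 φ (φ.imp φ))) (a1 φ φ)

theorem box_mono {φ ψ : BForm} (h : MS4 (φ.imp ψ)) : MS4 (φ.box.imp ψ.box) :=
  mp _ _ (boxK φ ψ) (necBox _ h)

theorem all_mono {φ ψ : BForm} (h : MS4 (φ.imp ψ)) : MS4 (φ.all.imp ψ.all) :=
  mp _ _ (allK φ ψ) (necAll _ h)

inductive Derives (Γ : Set BForm) : BForm → Prop
  | thm {φ : BForm} : MS4 φ → Derives Γ φ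
  | mem {φ : BForm} : φ ∈ Γ → Derives Γ φ
  | mp {φ ψ : BForm} : Derives Γ (φ.imp ψ) → Derives Γ φ → Derives Γ ψ

namespace Derives

variable {Γ Δ : Set BForm} {φ ψ : BForm}

theorem mono (h : Derives Γ φ) (hΓΔ : Γ ⊆ Δ) : Derives Δ φ := by
  induction h with
  | thm h => exact thm h
  | mem h => exact mem (hΓΔ h)
  | mp _ _ ih₁ ih₂ => exact mp ih₁ ih₂

theorem deduction (h : Derives (insert φ Γ) ψ) : Derives Γ (φ.imp ψ) := by
  induction h with
  | thm h => exact mp (thm (a1 _ _)) (thm h)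
  | mem h =>
    rcases h with rfl | h
    · exact thm (imp_self _)
    · exact mp (thm (a1 _ _)) (mem h)
  | mp _ _ ih₁ ih₂ => exact mp (mp (thm (a2 _ _ _)) ih₁) ih₂

theorem of_empty (h : Derives ∅ φ) : MS4 φ := by
  induction h with
  | thm h => exact h
  | mem h => exact absurd h (Set.notMem_empty _)
  | mp _ _ ih₁ ih₂ => exact MS4.mp _ _ ih₁ ih₂

theorem exists_of_sUnion {c : Set (Set BForm)} (hc : IsChain (· ⊆ ·) c) (hne : c.Nonempty)
    (h : Derives (⋃₀ c) φ) : ∃ Γ ∈ c, Derives Γ φ := by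
  induction h with
  | thm h => exact ⟨hne.some, hne.some_mem, thm h⟩
  | mem h =>
    obtain ⟨Γ, hΓ, hφ⟩ := h
    exact ⟨Γ, hΓ, mem hφ⟩
  | mp _ _ ih₁ ih₂ =>
    obtain ⟨Γ₁, hΓ₁, h₁⟩ := ih₁
    obtain ⟨Γ₂, hΓ₂, h₂⟩ := ih₂
    rcases hc.total hΓ₁ hΓ₂ with h12 | h21
    · exact ⟨Γ₂, hΓ₂, mp (h₁.mono h12) h₂⟩
    · exact ⟨Γ₁, hΓ₁, mp h₁ (h₂.mono h21)⟩

theorem imp_of_and {α β : BForm} (h₁ : Derives Γ (α.imp (φ.imp ψ))) (h₂ : Derives Γ (β.imp φ)) :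
    Derives Γ ((α.and β).imp ψ) := by
  apply deduction
  have hαβ : Derives (insert (α.and β) Γ) (α.and β) := mem (Set.mem_insert _ _)
  have hα := mp (thm (a3 α β)) hαβ
  have hβ := mp (thm (a4 α β)) hαβ
  exact mp (mp (h₁.mono (Set.subset_insert _ _)) hα) (mp (h₂.mono (Set.subset_insert _ _)) hβ)

theorem exists_imp_of_union {S : Set BForm} (hS : S.Nonempty)
    (hand : ∀ α ∈ S, ∀ β ∈ S, α.and β ∈ S) (h : Derives (Γ ∪ S) φ) :
    ∃ α ∈ S, Derives Γ (α.imp φ) := by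
  induction h with
  | thm h => exact ⟨hS.some, hS.some_mem, mp (thm (a1 _ _)) (thm h)⟩
  | @mem ψ h =>
    rcases h with h | h
    · exact ⟨hS.some, hS.some_mem, mp (thm (a1 _ _)) (mem h)⟩
    · exact ⟨ψ, h, thm (imp_self ψ)⟩
  | mp _ _ ih₁ ih₂ =>
    obtain ⟨α, hα, h₁⟩ := ih₁
    obtain ⟨β, hβ, h₂⟩ := ih₂
    exact ⟨α.and β, hand α hα β hβ, imp_of_and h₁ h₂⟩

end Derives

def Consistent (Γ : Set BForm) : Prop := ¬ Derives Γ .bot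

def MaxConsistent (Γ : Set BForm) : Prop := Consistent Γ ∧ ∀ φ, φ ∈ Γ ∨ φ.neg ∈ Γ

theorem consistent_insert_neg {Γ : Set BForm} {φ : BForm} (h : ¬ Derives Γ φ) :
    Consistent (insert φ.neg Γ) :=
  fun hbot => h (.mp (.thm (dne φ)) hbot.deduction)

theorem exists_maxConsistent_superset {S : Set BForm} (hS : Consistent S) :
    ∃ Γ, S ⊆ Γ ∧ MaxConsistent Γ := by
  obtain ⟨Γ, hSΓ, hmax⟩ := zorn_subset_nonempty {Γ | Consistent Γ}
    (fun c hc hchain hne => ⟨⋃₀ c, fun hbot => by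
      obtain ⟨Γ, hΓc, hΓ⟩ := hbot.exists_of_sUnion hchain hne
      exact hc hΓc hΓ, fun _ => Set.subset_sUnion_of_mem⟩) S hS
  have hneg_of_not_mem : ∀ φ, φ ∉ Γ → Derives Γ φ.neg := fun φ hφ => by
    by_contra hnφ
    exact hφ (hmax.2 (fun hbot => hnφ hbot.deduction) (Set.subset_insert _ _)
      (Set.mem_insert _ _))
  refine ⟨Γ, hSΓ, hmax.1, fun φ => or_iff_not_imp_left.2 fun hφ => ?_⟩
  by_contra hnφ
  exact hmax.1 (.mp (hneg_of_not_mem _ hnφ) (hneg_of_not_mem _ hφ))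

theorem exists_maxConsistent_notMem {S : Set BForm} {φ : BForm} (h : ¬ Derives S φ) :
    ∃ Γ, S ⊆ Γ ∧ MaxConsistent Γ ∧ φ ∉ Γ := by
  obtain ⟨Γ, hSΓ, hΓ⟩ := exists_maxConsistent_superset (consistent_insert_neg h)
  exact ⟨Γ, (Set.subset_insert _ _).trans hSΓ, hΓ,
    fun hφ => hΓ.1 (.mp (.mem (hSΓ (Set.mem_insert _ _))) (.mem hφ))⟩

namespace MaxConsistent

variable {Γ : Set BForm} {φ ψ : BForm}

theorem mem_of_derives (hΓ : MaxConsistent Γ) (h : Derives Γ φ) : φ ∈ Γ :=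
  (hΓ.2 φ).resolve_right fun hn => hΓ.1 (.mp (.mem hn) h)

theorem mem_of_MS4 (hΓ : MaxConsistent Γ) (h : MS4 φ) : φ ∈ Γ :=
  hΓ.mem_of_derives (.thm h)

theorem mem_of_imp_mem (hΓ : MaxConsistent Γ) (h : φ.imp ψ ∈ Γ) (hφ : φ ∈ Γ) : ψ ∈ Γ :=
  hΓ.mem_of_derives (.mp (.mem h) (.mem hφ))

theorem mem_of_MS4_imp (hΓ : MaxConsistent Γ) (h : MS4 (φ.imp ψ)) (hφ : φ ∈ Γ) : ψ ∈ Γ :=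
  hΓ.mem_of_imp_mem (hΓ.mem_of_MS4 h) hφ

theorem bot_notMem (hΓ : MaxConsistent Γ) : BForm.bot ∉ Γ :=
  fun h => hΓ.1 (.mem h)

theorem neg_mem_iff (hΓ : MaxConsistent Γ) : φ.neg ∈ Γ ↔ φ ∉ Γ :=
  ⟨fun hn hφ => hΓ.bot_notMem (hΓ.mem_of_imp_mem hn hφ), (hΓ.2 φ).resolve_left⟩

theorem imp_mem_iff (hΓ : MaxConsistent Γ) : φ.imp ψ ∈ Γ ↔ (φ ∈ Γ → ψ ∈ Γ) := by
  refine ⟨hΓ.mem_of_imp_mem, fun h => ?_⟩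
  by_cases hφ : φ ∈ Γ
  · exact hΓ.mem_of_MS4_imp (a1 ψ φ) (h hφ)
  · have hn : φ.neg ∈ Γ := hΓ.neg_mem_iff.2 hφ
    refine hΓ.mem_of_derives (Derives.deduction ?_)
    exact .mp (.thm (a9 ψ)) (.mp (.mem (Or.inr hn)) (.mem (Or.inl rfl)))

theorem and_mem_iff (hΓ : MaxConsistent Γ) : φ.and ψ ∈ Γ ↔ φ ∈ Γ ∧ ψ ∈ Γ :=
  ⟨fun h => ⟨hΓ.mem_of_MS4_imp (a3 φ ψ) h, hΓ.mem_of_MS4_imp (a4 φ ψ) h⟩,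
    fun ⟨hφ, hψ⟩ => hΓ.mem_of_imp_mem (hΓ.mem_of_MS4_imp (a5 φ ψ) hφ) hψ⟩

theorem or_mem_iff (hΓ : MaxConsistent Γ) : φ.or ψ ∈ Γ ↔ φ ∈ Γ ∨ ψ ∈ Γ := by
  refine ⟨fun h => ?_, fun h => h.elim (hΓ.mem_of_MS4_imp (a6 φ ψ)) (hΓ.mem_of_MS4_imp (a7 φ ψ))⟩
  by_contra! hn
  have hφ := hΓ.neg_mem_iff.2 hn.1
  have hψ := hΓ.neg_mem_iff.2 hn.2
  exact hΓ.bot_notMem (hΓ.mem_of_derives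
    (.mp (.mp (.mp (.thm (a8 φ ψ .bot)) (.mem hφ)) (.mem hψ)) (.mem h)))

end MaxConsistent

/-- With the membership lemmas above, this reduces propositional reasoning in `MS4` to boolean
reasoning about a maximal consistent set. -/
theorem of_forall_maxConsistent {φ : BForm} (h : ∀ Γ, MaxConsistent Γ → φ ∈ Γ) : MS4 φ := by
  by_contra hφ
  obtain ⟨Γ, -, hΓ, hφΓ⟩ := exists_maxConsistent_notMem fun hd => hφ hd.of_empty
  exact hφΓ (h Γ hΓ)

theorem MaxConsistent.mem_of_derives_of_normal {m : BForm → BForm}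
    (hK : ∀ φ ψ, MS4 ((m (φ.imp ψ)).imp ((m φ).imp (m ψ)))) (hN : ∀ φ, MS4 φ → MS4 (m φ))
    {Γ S : Set BForm} {φ : BForm} (hΓ : MaxConsistent Γ) (hS : ∀ ψ ∈ S, m ψ ∈ Γ)
    (h : Derives S φ) : m φ ∈ Γ := by
  induction h with
  | thm h => exact hΓ.mem_of_MS4 (hN _ h)
  | mem h => exact hS _ h
  | mp _ _ ih₁ ih₂ => exact hΓ.mem_of_imp_mem (hΓ.mem_of_MS4_imp (hK _ _) ih₁) ih₂

def Stable (α : BForm) : Prop := MS4 (α.imp α.all)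

theorem stable_all (ψ : BForm) : Stable ψ.all := all4 ψ

/-- Axiom 5, derived from `B` and `4`. -/
theorem stable_neg_all (ψ : BForm) : Stable ψ.all.neg := by
  have hdni : MS4 (ψ.all.imp ψ.all.neg.neg) := of_forall_maxConsistent fun Γ hΓ => by
    simp only [hΓ.imp_mem_iff, hΓ.neg_mem_iff]
    tauto
  have hex : MS4 (ψ.all.neg.ex.imp ψ.all.neg) := of_forall_maxConsistent fun Γ hΓ => by
    have := hΓ.mem_of_MS4_imp (all_mono hdni)
    have := hΓ.mem_of_MS4_imp (all4 ψ)
    simp only [BForm.ex, hΓ.imp_mem_iff, hΓ.neg_mem_iff]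
    tauto
  exact of_forall_maxConsistent fun Γ hΓ =>
    hΓ.imp_mem_iff.2 fun h => hΓ.mem_of_MS4_imp (all_mono hex) (hΓ.mem_of_MS4_imp (allB _) h)

theorem Stable.and {α β : BForm} (hα : Stable α) (hβ : Stable β) : Stable (α.and β) :=
  of_forall_maxConsistent fun Γ hΓ => hΓ.imp_mem_iff.2 fun h => by
    obtain ⟨hαΓ, hβΓ⟩ := hΓ.and_mem_iff.1 h
    have hβall : (β.imp (α.and β)).all ∈ Γ :=
      hΓ.mem_of_MS4_imp (all_mono (a5 α β)) (hΓ.mem_of_MS4_imp hα hαΓ)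
    exact hΓ.mem_of_imp_mem (hΓ.mem_of_imp_mem (hΓ.mem_of_MS4 (allK _ _)) hβall)
      (hΓ.mem_of_MS4_imp hβ hβΓ)

theorem Stable.neg {α : BForm} (hα : Stable α) : Stable α.neg := by
  have hcontra : MS4 (α.all.neg.imp α.neg) := of_forall_maxConsistent fun Γ hΓ => by
    have := hΓ.mem_of_MS4_imp hα
    simp only [hΓ.imp_mem_iff, hΓ.neg_mem_iff]
    tauto
  refine of_forall_maxConsistent fun Γ hΓ => hΓ.imp_mem_iff.2 fun h => ?_
  have hnall : α.all.neg ∈ Γ := hΓ.neg_mem_iff.2 fun hall =>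
    hΓ.neg_mem_iff.1 h (hΓ.mem_of_MS4_imp (allT α) hall)
  exact hΓ.mem_of_MS4_imp (all_mono hcontra) (hΓ.mem_of_MS4_imp (stable_neg_all α) hnall)

def stablePart (Γ : Set BForm) : Set BForm := {α | α ∈ Γ ∧ Stable α}

def BoxRel (Γ Δ : Set BForm) : Prop := ∀ φ : BForm, φ.box ∈ Γ → φ ∈ Δ

def AllEquiv (Γ Δ : Set BForm) : Prop := ∀ φ : BForm, φ.all ∈ Γ ↔ φ.all ∈ Δ

theorem allEquiv_of_stablePart_subset {Γ Δ : Set BForm} (hΓ : MaxConsistent Γ)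
    (hΔ : MaxConsistent Δ) (h : stablePart Γ ⊆ Δ) : AllEquiv Γ Δ := fun φ => by
  refine ⟨fun hφ => h ⟨hφ, stable_all φ⟩, fun hφ => ?_⟩
  by_contra hnφ
  exact hΔ.neg_mem_iff.1 (h ⟨hΓ.neg_mem_iff.2 hnφ, stable_neg_all φ⟩) hφ

theorem exists_boxRel_notMem {Γ : Set BForm} {φ : BForm} (hΓ : MaxConsistent Γ)
    (h : φ.box ∉ Γ) : ∃ Δ, MaxConsistent Δ ∧ BoxRel Γ Δ ∧ φ ∉ Δ := by
  obtain ⟨Δ, hsub, hΔ, hφ⟩ := exists_maxConsistent_notMem (S := {ψ | ψ.box ∈ Γ}) (φ := φ)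
    fun hd => h (hΓ.mem_of_derives_of_normal boxK necBox (fun _ => id) hd)
  exact ⟨Δ, hΔ, hsub, hφ⟩

theorem exists_allEquiv_notMem {Γ : Set BForm} {φ : BForm} (hΓ : MaxConsistent Γ)
    (h : φ.all ∉ Γ) : ∃ Δ, MaxConsistent Δ ∧ AllEquiv Γ Δ ∧ φ ∉ Δ := by
  obtain ⟨Δ, hsub, hΔ, hφ⟩ := exists_maxConsistent_notMem (S := stablePart Γ) (φ := φ)
    fun hd => h (hΓ.mem_of_derives_of_normal allK necAll
      (fun _ hα => hΓ.mem_of_MS4_imp hα.2 hα.1) hd)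
  exact ⟨Δ, hΔ, allEquiv_of_stablePart_subset hΓ hΔ hsub, hφ⟩

theorem exists_boxRel_allEquiv {Γ Δ Θ : Set BForm} (hΓ : MaxConsistent Γ)
    (hΔ : MaxConsistent Δ) (hΘ : MaxConsistent Θ) (hE : AllEquiv Γ Δ) (hR : BoxRel Δ Θ) :
    ∃ Ξ, MaxConsistent Ξ ∧ BoxRel Γ Ξ ∧ AllEquiv Ξ Θ := by
  have hcons : Consistent ({ψ | ψ.box ∈ Γ} ∪ stablePart Θ) := fun hbot => by
    obtain ⟨α, ⟨hαΘ, hα⟩, hd⟩ := hbot.exists_imp_of_union (S := stablePart Θ)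
      ⟨_, hΘ.mem_of_MS4 (necAll _ (imp_self .bot)), stable_all _⟩
      fun α hα β hβ => ⟨hΘ.and_mem_iff.2 ⟨hα.1, hβ.1⟩, hα.2.and hβ.2⟩
    have hbox : α.neg.box ∈ Γ := hΓ.mem_of_derives_of_normal boxK necBox (fun _ => id) hd
    have hallbox : α.neg.box.all ∈ Γ :=
      hΓ.mem_of_MS4_imp (comm _) (hΓ.mem_of_MS4_imp (box_mono hα.neg) hbox)
    have hboxΔ : α.neg.box ∈ Δ := hΔ.mem_of_MS4_imp (allT _) ((hE _).1 hallbox)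
    exact hΘ.neg_mem_iff.1 (hR _ hboxΔ) hαΘ
  obtain ⟨Ξ, hsub, hΞ⟩ := exists_maxConsistent_superset hcons
  exact ⟨Ξ, hΞ, fun ψ hψ => hsub (Or.inl hψ),
    fun ψ => (allEquiv_of_stablePart_subset hΘ hΞ (fun _ hα => hsub (Or.inr hα)) ψ).symm⟩

end MS4

structure MS4Frame (W : Type*) where
  R : W → W → Prop
  E : W → W → Prop
  R_refl : ∀ w, R w w
  R_trans : ∀ {u v w}, R u v → R v w → R u w
  E_equiv : Equivalence E
  comm : ∀ {u v w}, E u v → R v w → ∃ x, R u x ∧ E x w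

namespace MS4Frame

variable {W : Type*}

def Sat (F : MS4Frame W) (V : ℕ → W → Prop) : W → AForm → Prop
  | w, .var n => V n w
  | _, .bot => False
  | w, .and φ ψ => F.Sat V w φ ∧ F.Sat V w ψ
  | w, .or φ ψ => F.Sat V w φ ∨ F.Sat V w ψ
  | w, .imp φ ψ => F.Sat V w φ → F.Sat V w ψ
  | w, .boxF φ => ∀ v, F.R w v → F.Sat V v φ
  | w, .boxP φ => ∀ v, F.R v w → F.Sat V v φ
  | w, .fa φ => ∀ v, F.E w v → F.Sat V v φ

theorem sat_of_MS4t (F : MS4Frame W) (V : ℕ → W → Prop) {φ : AForm} (h : MS4t φ) (w : W) :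
    F.Sat V w φ := by
  induction h generalizing w with
  | a1 | a2 | a3 | a4 | a5 | a6 | a7 | a8 | a9 | dne =>
    simp only [Sat, AForm.neg]
    tauto
  | bFK | bPK | faK => exact fun h₁ h₂ v hv => h₁ v hv (h₂ v hv)
  | bFT | bPT => exact fun h => h w (F.R_refl w)
  | bF4 => exact fun h u hu v hv => h v (F.R_trans hu hv)
  | bP4 => exact fun h u hu v hv => h v (F.R_trans hv hu)
  | tense1 | tense2 => exact fun h v hv hneg => hneg w hv h
  | faT => exact fun h => h w (F.E_equiv.refl w)
  | fa4 => exact fun h u hu v hv => h v (F.E_equiv.trans hu hv)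
  | faB => exact fun h v hv hneg => hneg w (F.E_equiv.symm hv) h
  | comm =>
    intro h u hu v hv
    obtain ⟨x, hx, hxv⟩ := F.comm hu hv
    exact h x hx v hxv
  | mp _ _ _ _ ih₁ ih₂ => exact ih₁ w (ih₂ w)
  | necF _ _ ih | necP _ _ ih | necFa _ _ ih => exact fun v _ => ih v

end MS4Frame

namespace MS4

def canonicalFrame : MS4Frame {Γ : Set BForm // MaxConsistent Γ} where
  R Γ Δ := BoxRel Γ.1 Δ.1
  E Γ Δ := AllEquiv Γ.1 Δ.1
  R_refl Γ φ := Γ.2.mem_of_MS4_imp (boxT φ)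
  R_trans {Γ _ _} h₁ h₂ φ hφ := h₂ φ (h₁ φ.box (Γ.2.mem_of_MS4_imp (box4 φ) hφ))
  E_equiv := ⟨fun _ _ => Iff.rfl, fun h φ => (h φ).symm, fun h₁ h₂ φ => (h₁ φ).trans (h₂ φ)⟩
  comm {Γ Δ Θ} hE hR := by
    obtain ⟨Ξ, hΞ, hRΞ, hEΞ⟩ := exists_boxRel_allEquiv Γ.2 Δ.2 Θ.2 hE hR
    exact ⟨⟨Ξ, hΞ⟩, hRΞ, hEΞ⟩

theorem canonicalFrame_sat_sharp_iff (φ : BForm) (Γ : {Γ : Set BForm // MaxConsistent Γ}) :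
    canonicalFrame.Sat (fun n Γ => .var n ∈ Γ.1) Γ (sharp φ) ↔ φ ∈ Γ.1 := by
  induction φ generalizing Γ with
  | var n => rfl
  | bot => exact iff_of_false id Γ.2.bot_notMem
  | and φ ψ ihφ ihψ => simp only [sharp, MS4Frame.Sat, ihφ, ihψ, Γ.2.and_mem_iff]
  | or φ ψ ihφ ihψ => simp only [sharp, MS4Frame.Sat, ihφ, ihψ, Γ.2.or_mem_iff]
  | imp φ ψ ihφ ihψ => simp only [sharp, MS4Frame.Sat, ihφ, ihψ, Γ.2.imp_mem_iff]
  | box φ ih =>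
    refine ⟨fun h => ?_, fun h Δ hR => (ih Δ).2 (hR φ h)⟩
    by_contra hφ
    obtain ⟨Δ, hΔ, hR, hφΔ⟩ := exists_boxRel_notMem Γ.2 hφ
    exact hφΔ ((ih ⟨Δ, hΔ⟩).1 (h ⟨Δ, hΔ⟩ hR))
  | all φ ih =>
    refine ⟨fun h => ?_, fun h Δ hE => (ih Δ).2 (Δ.2.mem_of_MS4_imp (allT φ) ((hE φ).1 h))⟩
    by_contra hφ
    obtain ⟨Δ, hΔ, hE, hφΔ⟩ := exists_allEquiv_notMem Γ.2 hφ
    exact hφΔ ((ih ⟨Δ, hΔ⟩).1 (h ⟨Δ, hΔ⟩ hE))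

end MS4

/-- The translation `(−)^#` of `MS4` into `MS4.t` is full and
faithful: `MS4 ⊢ φ` iff `MS4.t ⊢ φ^#`. -/
theorem sharp_full_and_faithful (φ : BForm) : MS4 φ ↔ MS4t (sharp φ) := by
  refine ⟨MS4t_sharp_of_MS4, fun h => MS4.of_forall_maxConsistent fun Γ hΓ => ?_⟩
  exact (MS4.canonicalFrame_sat_sharp_iff φ ⟨Γ, hΓ⟩).1
    (MS4.canonicalFrame.sat_of_MS4t _ h ⟨Γ, hΓ⟩)
end

section
/- The translation (−)^† of TS4 into MS4.t is full and faithful: for every formula φ of the language ML, TS4 ⊢ φ if and only if MS4.t ⊢ φ^†. -/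
/-- Formulas of the multimodal language `ML` with modalities `□`, `■_F`, `■_P`. -/
inductive TForm : Type
  | var : Nat → TForm
  | bot : TForm
  | and : TForm → TForm → TForm
  | or  : TForm → TForm → TForm
  | imp : TForm → TForm → TForm
  | box : TForm → TForm
  | bF  : TForm → TForm
  | bP  : TForm → TForm

def TForm.neg (φ : TForm) : TForm := φ.imp TForm.bot
def TForm.iff (φ ψ : TForm) : TForm := (φ.imp ψ).and (ψ.imp φ)
/-- `◇φ := ¬□¬φ`. -/
def TForm.dia (φ : TForm) : TForm := ((φ.neg).box).neg
/-- `◆_F φ := ¬■_F¬φ`. -/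
def TForm.dF (φ : TForm) : TForm := ((φ.neg).bF).neg
/-- `◆_P φ := ¬■_P¬φ`. -/
def TForm.dP (φ : TForm) : TForm := ((φ.neg).bP).neg

/-- The logic `TS4`: classical logic with S4-axioms for `□`, `■_F` and `■_P`,
the tense axioms `p → ■_P◆_F p` and `p → ■_F◆_P p`, and the connecting axioms
`◇p → ◆_F p` and `◆_F p → ◇(◆_F p ∧ ◆_P p)`, closed under modus ponens and the
three necessitation rules (axioms are given as schemes, hence closure under
uniform substitution is automatic). -/
inductive TS4 : TForm → Prop
  -- classical propositional axioms
  | a1 (φ ψ : TForm) : TS4 (φ.imp (ψ.imp φ))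
  | a2 (φ ψ χ : TForm) : TS4 ((φ.imp (ψ.imp χ)).imp ((φ.imp ψ).imp (φ.imp χ)))
  | a3 (φ ψ : TForm) : TS4 ((φ.and ψ).imp φ)
  | a4 (φ ψ : TForm) : TS4 ((φ.and ψ).imp ψ)
  | a5 (φ ψ : TForm) : TS4 (φ.imp (ψ.imp (φ.and ψ)))
  | a6 (φ ψ : TForm) : TS4 (φ.imp (φ.or ψ))
  | a7 (φ ψ : TForm) : TS4 (ψ.imp (φ.or ψ))
  | a8 (φ ψ χ : TForm) : TS4 ((φ.imp χ).imp ((ψ.imp χ).imp ((φ.or ψ).imp χ)))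
  | a9 (φ : TForm) : TS4 (TForm.bot.imp φ)
  | dne (φ : TForm) : TS4 ((φ.neg.neg).imp φ)
  -- S4-axioms for □
  | boxK (φ ψ : TForm) : TS4 (((φ.imp ψ).box).imp ((φ.box).imp ψ.box))
  | boxT (φ : TForm) : TS4 ((φ.box).imp φ)
  | box4 (φ : TForm) : TS4 ((φ.box).imp φ.box.box)
  -- S4-axioms for ■_F
  | bFK (φ ψ : TForm) : TS4 (((φ.imp ψ).bF).imp ((φ.bF).imp ψ.bF))
  | bFT (φ : TForm) : TS4 ((φ.bF).imp φ)
  | bF4 (φ : TForm) : TS4 ((φ.bF).imp φ.bF.bF)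
  -- S4-axioms for ■_P
  | bPK (φ ψ : TForm) : TS4 (((φ.imp ψ).bP).imp ((φ.bP).imp ψ.bP))
  | bPT (φ : TForm) : TS4 ((φ.bP).imp φ)
  | bP4 (φ : TForm) : TS4 ((φ.bP).imp φ.bP.bP)
  -- tense axioms
  | tense1 (φ : TForm) : TS4 (φ.imp ((φ.dF).bP))
  | tense2 (φ : TForm) : TS4 (φ.imp ((φ.dP).bF))
  -- connecting axioms
  | conn1 (φ : TForm) : TS4 ((φ.dia).imp φ.dF)
  | conn2 (φ : TForm) : TS4 ((φ.dF).imp (((φ.dF).and φ.dP).dia))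
  -- rules
  | mp (φ ψ : TForm) : TS4 (φ.imp ψ) → TS4 φ → TS4 ψ
  | necBox (φ : TForm) : TS4 φ → TS4 φ.box
  | necF (φ : TForm) : TS4 φ → TS4 φ.bF
  | necP (φ : TForm) : TS4 φ → TS4 φ.bP

/-- The translation `(−)^† : ML → L_T∀`, with `(□φ)^† = □_F φ^†`,
`(■_F φ)^† = □_F ∀ φ^†` and `(■_P φ)^† = ∀ □_P φ^†`. -/
def dagger : TForm → AForm
  | .var n => AForm.var n
  | .bot => AForm.bot
  | .and φ ψ => (dagger φ).and (dagger ψ)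
  | .or φ ψ => (dagger φ).or (dagger ψ)
  | .imp φ ψ => (dagger φ).imp (dagger ψ)
  | .box φ => (dagger φ).boxF
  | .bF φ => ((dagger φ).fa).boxF
  | .bP φ => ((dagger φ).boxP).fa

/-!
Fullness: the translation of every `TS4` axiom is provable in `MS4.t`. The one non-obvious case
is axiom 4 for `■_P`, whose translation needs the commutation `∀□_P p → □_P∀p`; it follows from
`comm` through the tense adjunction and the S5 laws of `∀`.

Faithfulness: let `R`, `Q_F`, `Q_P` be the canonical relations of `□`, `■_F`, `■_P` on maximal
`TS4`-consistent sets and `E = Q_F ∩ Q_F⁻¹`. The tense axioms make `Q_P` the converse of `Q_F`,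
the first connecting axiom gives `R ⊆ Q_F` and the second one `Q_F ⊆ R ; E`, so `Q_F = R ; E` and
`Q_P = E ; R⁻¹`. Hence `(W, R, E)` is an `MS4.t`-frame in which `φ^†` holds at `Γ` exactly when
`φ ∈ Γ`, and soundness of `MS4.t` on it turns a proof of `φ^†` into membership of `φ` in every
maximal consistent set.
-/

structure HilbertCalculus (F : Type) where
  Provable : F → Prop
  imp : F → F → F
  and : F → F → F
  or : F → F → F
  bot : F
  ax_k : ∀ φ ψ, Provable (imp φ (imp ψ φ))
  ax_s : ∀ φ ψ χ, Provable (imp (imp φ (imp ψ χ)) (imp (imp φ ψ) (imp φ χ)))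
  and_elim_left : ∀ φ ψ, Provable (imp (and φ ψ) φ)
  and_elim_right : ∀ φ ψ, Provable (imp (and φ ψ) ψ)
  and_intro : ∀ φ ψ, Provable (imp φ (imp ψ (and φ ψ)))
  or_intro_left : ∀ φ ψ, Provable (imp φ (or φ ψ))
  or_intro_right : ∀ φ ψ, Provable (imp ψ (or φ ψ))
  or_elim : ∀ φ ψ χ, Provable (imp (imp φ χ) (imp (imp ψ χ) (imp (or φ ψ) χ)))
  bot_elim : ∀ φ, Provable (imp bot φ)
  dne : ∀ φ, Provable (imp (imp (imp φ bot) bot) φ)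
  mp : ∀ {φ ψ}, Provable (imp φ ψ) → Provable φ → Provable ψ

namespace HilbertCalculus

variable {F : Type} (S : HilbertCalculus F)

def neg (φ : F) : F := S.imp φ S.bot

inductive Derivable (Γ : Set F) : F → Prop
  | ax {φ} : S.Provable φ → Derivable Γ φ
  | hyp {φ} : φ ∈ Γ → Derivable Γ φ
  | mp {φ ψ} : Derivable Γ (S.imp φ ψ) → Derivable Γ φ → Derivable Γ ψ

def Consistent (Γ : Set F) : Prop := ¬ S.Derivable Γ S.bot

def MaxConsistent (Γ : Set F) : Prop := Maximal S.Consistent Γ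

def World : Type := {Γ : Set F // S.MaxConsistent Γ}

theorem provable_imp_self (φ : F) : S.Provable (S.imp φ φ) :=
  S.mp (S.mp (S.ax_s φ (S.imp φ φ) φ) (S.ax_k φ (S.imp φ φ))) (S.ax_k φ φ)

variable {S}

namespace Derivable

variable {Γ Δ : Set F} {φ : F}

theorem trans (h : S.Derivable Γ φ) (hΓ : ∀ ψ ∈ Γ, S.Derivable Δ ψ) : S.Derivable Δ φ := by
  induction h with
  | ax h => exact ax h
  | hyp h => exact hΓ _ h
  | mp _ _ ih₁ ih₂ => exact mp ih₁ ih₂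

theorem imp_of_insert {a : F} (h : S.Derivable (insert a Γ) φ) : S.Derivable Γ (S.imp a φ) := by
  induction h with
  | ax h => exact mp (ax (S.ax_k _ _)) (ax h)
  | hyp h =>
    rcases h with rfl | h
    · exact ax (S.provable_imp_self _)
    · exact mp (ax (S.ax_k _ _)) (hyp h)
  | mp _ _ ih₁ ih₂ => exact mp (mp (ax (S.ax_s _ _ _)) ih₁) ih₂

theorem provable_of_empty (h : S.Derivable ∅ φ) : S.Provable φ := by
  induction h with
  | ax h => exact h
  | hyp h => exact absurd h (Set.notMem_empty _)
  | mp _ _ ih₁ ih₂ => exact S.mp ih₁ ih₂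

theorem provable_imp_of_singleton {a : F} (h : S.Derivable {a} φ) : S.Provable (S.imp a φ) :=
  provable_of_empty (imp_of_insert (by simpa using h))

theorem exists_of_iUnion {ι : Type*} [Nonempty ι] {Γ : ι → Set F}
    (hdir : ∀ i j, ∃ k, ∀ ψ ∈ Γ i ∪ Γ j, S.Derivable (Γ k) ψ)
    (h : S.Derivable (⋃ i, Γ i) φ) : ∃ i, S.Derivable (Γ i) φ := by
  induction h with
  | ax h => exact ⟨Classical.arbitrary ι, ax h⟩
  | hyp h =>
    obtain ⟨i, hi⟩ := Set.mem_iUnion.1 h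
    exact ⟨i, hyp hi⟩
  | mp _ _ ih₁ ih₂ =>
    obtain ⟨⟨i, hi⟩, ⟨j, hj⟩⟩ := And.intro ih₁ ih₂
    obtain ⟨k, hk⟩ := hdir i j
    exact ⟨k, mp (hi.trans fun ψ hψ => hk ψ (.inl hψ)) (hj.trans fun ψ hψ => hk ψ (.inr hψ))⟩

end Derivable

theorem consistent_iUnion {ι : Type*} [Nonempty ι] {Γ : ι → Set F}
    (hdir : ∀ i j, ∃ k, ∀ ψ ∈ Γ i ∪ Γ j, S.Derivable (Γ k) ψ) (hΓ : ∀ i, S.Consistent (Γ i)) :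
    S.Consistent (⋃ i, Γ i) := fun h =>
  let ⟨i, hi⟩ := h.exists_of_iUnion hdir
  hΓ i hi

theorem exists_maxConsistent_superset {Γ : Set F} (h : S.Consistent Γ) :
    ∃ Δ, Γ ⊆ Δ ∧ S.MaxConsistent Δ := by
  refine zorn_subset_nonempty {Δ | S.Consistent Δ} (fun c hc hchain ⟨s, hs⟩ => ?_) Γ h
  have : Nonempty c := ⟨⟨s, hs⟩⟩
  refine ⟨⋃₀ c, ?_, fun _ => Set.subset_sUnion_of_mem⟩
  rw [Set.sUnion_eq_iUnion]
  refine consistent_iUnion (fun i j => ?_) fun i => hc i.2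
  rcases hchain.total i.2 j.2 with hij | hji
  · exact ⟨j, fun ψ hψ => .hyp (hψ.elim (fun h => hij h) id)⟩
  · exact ⟨i, fun ψ hψ => .hyp (hψ.elim id fun h => hji h)⟩

section Provable

variable (S)

theorem imp_trans {a b c : F} (h₁ : S.Provable (S.imp a b)) (h₂ : S.Provable (S.imp b c)) :
    S.Provable (S.imp a c) :=
  Derivable.provable_imp_of_singleton (.mp (.ax h₂) (.mp (.ax h₁) (.hyp rfl)))

theorem imp_contrapose {a b : F} (h : S.Provable (S.imp a b)) :
    S.Provable (S.imp (S.neg b) (S.neg a)) :=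
  Derivable.provable_of_empty <| .imp_of_insert <| .imp_of_insert <|
    .mp (.hyp (by simp [neg])) (.mp (.ax h) (.hyp (by simp)))

theorem imp_neg_neg (a : F) : S.Provable (S.imp a (S.neg (S.neg a))) :=
  Derivable.provable_of_empty <| .imp_of_insert <| .imp_of_insert <|
    .mp (.hyp (Set.mem_insert _ _)) (.hyp (by simp))

theorem imp_and {a b c : F} (ha : S.Provable (S.imp c a)) (hb : S.Provable (S.imp c b)) :
    S.Provable (S.imp c (S.and a b)) :=
  Derivable.provable_imp_of_singleton <|
    .mp (.mp (.ax (S.and_intro a b)) (.mp (.ax ha) (.hyp rfl))) (.mp (.ax hb) (.hyp rfl))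

end Provable

namespace MaxConsistent

variable {Γ : Set F} (hΓ : S.MaxConsistent Γ)
include hΓ

theorem mem_of_derivable {φ : F} (h : S.Derivable Γ φ) : φ ∈ Γ := by
  have hcons : S.Consistent (insert φ Γ) := fun hbot => hΓ.1 (.mp hbot.imp_of_insert h)
  exact hΓ.2 hcons (Set.subset_insert _ _) (Set.mem_insert _ _)

theorem mem_of_provable {φ : F} (h : S.Provable φ) : φ ∈ Γ :=
  hΓ.mem_of_derivable (.ax h)

theorem mem_of_imp_mem {φ ψ : F} (h : S.imp φ ψ ∈ Γ) (hφ : φ ∈ Γ) : ψ ∈ Γ :=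
  hΓ.mem_of_derivable (.mp (.hyp h) (.hyp hφ))

theorem bot_not_mem : S.bot ∉ Γ := fun h => hΓ.1 (.hyp h)

theorem nonempty : Γ.Nonempty := ⟨_, hΓ.mem_of_provable (S.provable_imp_self S.bot)⟩

theorem neg_mem_iff {φ : F} : S.neg φ ∈ Γ ↔ φ ∉ Γ := by
  refine ⟨fun h hφ => hΓ.bot_not_mem (hΓ.mem_of_imp_mem h hφ), fun hφ => ?_⟩
  have hincons : ¬ S.Consistent (insert φ Γ) := fun hcons =>
    hφ (hΓ.2 hcons (Set.subset_insert _ _) (Set.mem_insert _ _))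
  exact hΓ.mem_of_derivable (not_not.1 hincons).imp_of_insert

theorem imp_mem_iff {φ ψ : F} : S.imp φ ψ ∈ Γ ↔ (φ ∈ Γ → ψ ∈ Γ) := by
  refine ⟨hΓ.mem_of_imp_mem, fun h => ?_⟩
  by_cases hφ : φ ∈ Γ
  · exact hΓ.mem_of_imp_mem (hΓ.mem_of_provable (S.ax_k ψ φ)) (h hφ)
  · have hneg : S.neg φ ∈ Γ := (hΓ.neg_mem_iff).2 hφ
    exact hΓ.mem_of_derivable <| .imp_of_insert <|
      .mp (.ax (S.bot_elim ψ))
        (.mp (.hyp (Set.mem_insert_of_mem _ hneg)) (.hyp (Set.mem_insert _ _)))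

theorem and_mem_iff {φ ψ : F} : S.and φ ψ ∈ Γ ↔ φ ∈ Γ ∧ ψ ∈ Γ :=
  ⟨fun h => ⟨hΓ.mem_of_imp_mem (hΓ.mem_of_provable (S.and_elim_left φ ψ)) h,
    hΓ.mem_of_imp_mem (hΓ.mem_of_provable (S.and_elim_right φ ψ)) h⟩,
   fun ⟨hφ, hψ⟩ =>
    hΓ.mem_of_imp_mem (hΓ.mem_of_imp_mem (hΓ.mem_of_provable (S.and_intro φ ψ)) hφ) hψ⟩

theorem or_mem_iff {φ ψ : F} : S.or φ ψ ∈ Γ ↔ φ ∈ Γ ∨ ψ ∈ Γ := by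
  refine ⟨fun h => ?_, ?_⟩
  · by_contra! hn
    have hφ := (hΓ.neg_mem_iff).2 hn.1
    have hψ := (hΓ.neg_mem_iff).2 hn.2
    have hor : S.neg (S.or φ ψ) ∈ Γ :=
      hΓ.mem_of_imp_mem (hΓ.mem_of_imp_mem (hΓ.mem_of_provable (S.or_elim φ ψ S.bot)) hφ) hψ
    exact (hΓ.neg_mem_iff).1 hor h
  · rintro (h | h)
    · exact hΓ.mem_of_imp_mem (hΓ.mem_of_provable (S.or_intro_left φ ψ)) h
    · exact hΓ.mem_of_imp_mem (hΓ.mem_of_provable (S.or_intro_right φ ψ)) h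

end MaxConsistent

theorem exists_maxConsistent_not_mem {φ : F} (h : ¬ S.Provable φ) :
    ∃ Γ, S.MaxConsistent Γ ∧ φ ∉ Γ := by
  have hcons : S.Consistent {S.neg φ} := fun hd =>
    h (S.mp (S.dne φ) hd.provable_imp_of_singleton)
  obtain ⟨Γ, hsub, hΓ⟩ := exists_maxConsistent_superset hcons
  exact ⟨Γ, hΓ, (hΓ.neg_mem_iff).1 (hsub rfl)⟩

end HilbertCalculus

namespace HilbertCalculus

variable {F : Type} {S : HilbertCalculus F}

structure NormalModality (S : HilbertCalculus F) where
  box : F → F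
  nec : ∀ {φ}, S.Provable φ → S.Provable (box φ)
  k : ∀ φ ψ, S.Provable (S.imp (box (S.imp φ ψ)) (S.imp (box φ) (box ψ)))

namespace NormalModality

variable (B : NormalModality S)

def dia (φ : F) : F := S.neg (B.box (S.neg φ))

def rel (Γ Δ : S.World) : Prop := ∀ φ, B.box φ ∈ Γ.1 → φ ∈ Δ.1

theorem mono {a b : F} (h : S.Provable (S.imp a b)) : S.Provable (S.imp (B.box a) (B.box b)) :=
  S.mp (B.k a b) (B.nec h)

theorem mono₂ {a b c : F} (h : S.Provable (S.imp a (S.imp b c))) :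
    S.Provable (S.imp (B.box a) (S.imp (B.box b) (B.box c))) :=
  S.imp_trans (B.mono h) (B.k b c)

theorem dia_mono {a b : F} (h : S.Provable (S.imp a b)) : S.Provable (S.imp (B.dia a) (B.dia b)) :=
  S.imp_contrapose (B.mono (S.imp_contrapose h))

variable {B} {Γ Δ Θ : S.World}

theorem box_mem_of_derivable {φ : F} (h : S.Derivable {ψ | B.box ψ ∈ Γ.1} φ) : B.box φ ∈ Γ.1 := by
  induction h with
  | ax h => exact Γ.2.mem_of_provable (B.nec h)
  | hyp h => exact h
  | mp _ _ ih₁ ih₂ =>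
    exact Γ.2.mem_of_imp_mem (Γ.2.mem_of_imp_mem (Γ.2.mem_of_provable (B.k _ _)) ih₁) ih₂

theorem dia_neg_mem_iff {φ : F} : B.dia (S.neg φ) ∈ Γ.1 ↔ B.box φ ∉ Γ.1 := by
  have hbox : B.box (S.neg (S.neg φ)) ∈ Γ.1 ↔ B.box φ ∈ Γ.1 :=
    ⟨Γ.2.mem_of_imp_mem (Γ.2.mem_of_provable (B.mono (S.dne φ))),
     Γ.2.mem_of_imp_mem (Γ.2.mem_of_provable (B.mono (S.imp_neg_neg φ)))⟩
  rw [dia, Γ.2.neg_mem_iff, hbox]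

theorem consistent_insert_of_dia_mem {χ : F} (h : B.dia χ ∈ Γ.1) :
    S.Consistent (insert χ {ψ | B.box ψ ∈ Γ.1}) := fun hd =>
  (Γ.2.neg_mem_iff).1 h (box_mem_of_derivable hd.imp_of_insert)

theorem box_mem_iff {φ : F} : B.box φ ∈ Γ.1 ↔ ∀ Δ, B.rel Γ Δ → φ ∈ Δ.1 := by
  refine ⟨fun h Δ hΔ => hΔ φ h, fun h => ?_⟩
  by_contra hφ
  obtain ⟨Δ, hsub, hΔ⟩ :=
    exists_maxConsistent_superset (consistent_insert_of_dia_mem (dia_neg_mem_iff.2 hφ))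
  exact (hΔ.neg_mem_iff).1 (hsub (Set.mem_insert _ _))
    (h ⟨Δ, hΔ⟩ fun ψ hψ => hsub (Set.mem_insert_of_mem _ hψ))

theorem dia_mem_of_rel (h : B.rel Γ Δ) {φ : F} (hφ : φ ∈ Δ.1) : B.dia φ ∈ Γ.1 :=
  (Γ.2.neg_mem_iff).2 fun hbox => (Δ.2.neg_mem_iff).1 (h _ hbox) hφ

theorem rel_of_forall_dia_mem (h : ∀ φ ∈ Δ.1, B.dia φ ∈ Γ.1) : B.rel Γ Δ := fun ψ hψ => by
  by_contra hψΔ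
  exact dia_neg_mem_iff.1 (h _ ((Δ.2.neg_mem_iff).2 hψΔ)) hψ

theorem rel_refl (hT : ∀ φ, S.Provable (S.imp (B.box φ) φ)) (Γ : S.World) : B.rel Γ Γ :=
  fun φ h => Γ.2.mem_of_imp_mem (Γ.2.mem_of_provable (hT φ)) h

theorem rel_trans (h4 : ∀ φ, S.Provable (S.imp (B.box φ) (B.box (B.box φ))))
    (hΓΔ : B.rel Γ Δ) (hΔΘ : B.rel Δ Θ) : B.rel Γ Θ :=
  fun φ h => hΔΘ φ (hΓΔ _ (Γ.2.mem_of_imp_mem (Γ.2.mem_of_provable (h4 φ)) h))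

theorem rel_swap_of_tense {C : NormalModality S}
    (htense : ∀ φ, S.Provable (S.imp φ (B.box (C.dia φ))))
    (h : B.rel Γ Δ) : C.rel Δ Γ := fun ψ hψ => by
  by_contra hψΓ
  have hdia : B.box (C.dia (S.neg ψ)) ∈ Γ.1 :=
    Γ.2.mem_of_imp_mem (Γ.2.mem_of_provable (htense _)) ((Γ.2.neg_mem_iff).2 hψΓ)
  exact dia_neg_mem_iff.1 (h _ hdia) hψ

end NormalModality

end HilbertCalculus

open HilbertCalculus

namespace TS4

def calculus : HilbertCalculus TForm where
  Provable := TS4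
  imp := .imp
  and := .and
  or := .or
  bot := .bot
  ax_k := a1
  ax_s := a2
  and_elim_left := a3
  and_elim_right := a4
  and_intro := a5
  or_intro_left := a6
  or_intro_right := a7
  or_elim := a8
  bot_elim := a9
  dne := dne
  mp := mp _ _

def boxModality : NormalModality calculus := ⟨.box, necBox _, boxK⟩
def bFModality : NormalModality calculus := ⟨.bF, necF _, bFK⟩
def bPModality : NormalModality calculus := ⟨.bP, necP _, bPK⟩

end TS4

namespace MS4t

def calculus : HilbertCalculus AForm where
  Provable := MS4t
  imp := .imp
  and := .and
  or := .or
  bot := .bot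
  ax_k := a1
  ax_s := a2
  and_elim_left := a3
  and_elim_right := a4
  and_intro := a5
  or_intro_left := a6
  or_intro_right := a7
  or_elim := a8
  bot_elim := a9
  dne := dne
  mp := mp _ _

def boxFModality : NormalModality calculus := ⟨.boxF, necF _, bFK⟩
def boxPModality : NormalModality calculus := ⟨.boxP, necP _, bPK⟩
def faModality : NormalModality calculus := ⟨.fa, necFa _, faK⟩

theorem imp_boxP_of_diaF_imp {a b : AForm} (h : MS4t (a.diaF.imp b)) : MS4t (a.imp b.boxP) :=
  calculus.imp_trans (tense1 a) (boxPModality.mono h)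

theorem neg_fa_imp_fa_neg_fa (a : AForm) : MS4t (a.fa.neg.imp a.fa.neg.fa) :=
  calculus.imp_trans (faB _) (faModality.mono (calculus.imp_contrapose
    (calculus.imp_trans (fa4 a) (faModality.mono (calculus.imp_neg_neg _)))))

theorem exq_fa_imp (a : AForm) : MS4t (a.fa.exq.imp a) :=
  calculus.imp_trans (calculus.imp_contrapose
    (calculus.imp_trans (calculus.imp_contrapose (faT a)) (neg_fa_imp_fa_neg_fa a))) (dne a)

theorem exq_diaF_imp_diaF_exq (a : AForm) : MS4t (a.diaF.exq.imp a.exq.diaF) :=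
  calculus.imp_trans (calculus.imp_contrapose (faModality.mono (calculus.imp_neg_neg _)))
    (calculus.imp_trans (calculus.imp_contrapose (comm a.neg))
      (calculus.imp_contrapose (boxFModality.mono (dne _))))

theorem diaF_fa_imp_fa_diaF (a : AForm) : MS4t (a.fa.diaF.imp a.diaF.fa) :=
  calculus.imp_trans (faB _)
    (faModality.mono (calculus.imp_trans (exq_diaF_imp_diaF_exq _)
      (boxFModality.dia_mono (exq_fa_imp a))))

theorem diaF_boxP_imp (a : AForm) : MS4t (a.boxP.diaF.imp a) :=
  calculus.imp_trans (calculus.imp_contrapose (calculus.imp_trans (tense2 a.neg)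
    (boxFModality.mono (calculus.imp_contrapose (boxPModality.mono (calculus.imp_neg_neg a))))))
    (dne a)

theorem fa_boxP_imp_boxP_fa (a : AForm) : MS4t (a.boxP.fa.imp a.fa.boxP) :=
  imp_boxP_of_diaF_imp
    (calculus.imp_trans (diaF_fa_imp_fa_diaF _) (faModality.mono (diaF_boxP_imp a)))

theorem dagger_bF4 (φ : TForm) : MS4t (dagger (φ.bF.imp φ.bF.bF)) :=
  calculus.imp_trans (bF4 _)
    (boxFModality.mono (calculus.imp_trans (boxFModality.mono (fa4 _)) (comm _)))

theorem dagger_bP4 (φ : TForm) : MS4t (dagger (φ.bP.imp φ.bP.bP)) :=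
  calculus.imp_trans (fa4 _)
    (faModality.mono (calculus.imp_trans (faModality.mono (bP4 _)) (fa_boxP_imp_boxP_fa _)))

theorem dagger_tense1 (φ : TForm) : MS4t (dagger (φ.imp φ.dF.bP)) :=
  calculus.imp_trans (faB _) (faModality.mono (imp_boxP_of_diaF_imp
    (calculus.imp_contrapose (boxFModality.mono (calculus.imp_neg_neg _)))))

theorem dagger_tense2 (φ : TForm) : MS4t (dagger (φ.imp φ.dP.bF)) :=
  calculus.imp_trans (tense2 _) (boxFModality.mono
    (calculus.imp_trans (calculus.imp_contrapose (faT _)) (neg_fa_imp_fa_neg_fa _)))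

theorem dagger_conn2 (φ : TForm) : MS4t (dagger (φ.dF.imp (φ.dF.and φ.dP).dia)) :=
  calculus.imp_trans (calculus.imp_contrapose (boxFModality.mono (dne _)))
    (boxFModality.dia_mono (calculus.imp_and (calculus.imp_contrapose (bFT _))
      (calculus.imp_contrapose (faModality.mono (bPT _)))))

theorem dagger_of_TS4 {φ : TForm} (h : TS4 φ) : MS4t (dagger φ) := by
  induction h with
  | a1 => exact a1 _ _
  | a2 => exact a2 _ _ _
  | a3 => exact a3 _ _
  | a4 => exact a4 _ _
  | a5 => exact a5 _ _
  | a6 => exact a6 _ _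
  | a7 => exact a7 _ _
  | a8 => exact a8 _ _ _
  | a9 => exact a9 _
  | dne => exact dne _
  | boxK => exact bFK _ _
  | boxT => exact bFT _
  | box4 => exact bF4 _
  | bFK => exact boxFModality.mono₂ (faK _ _)
  | bFT => exact calculus.imp_trans (bFT _) (faT _)
  | bF4 φ => exact dagger_bF4 φ
  | bPK => exact faModality.mono₂ (bPK _ _)
  | bPT => exact calculus.imp_trans (faT _) (bPT _)
  | bP4 φ => exact dagger_bP4 φ
  | tense1 φ => exact dagger_tense1 φ
  | tense2 φ => exact dagger_tense2 φ
  | conn1 => exact calculus.imp_contrapose (boxFModality.mono (faT _))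
  | conn2 φ => exact dagger_conn2 φ
  | mp _ _ _ _ ih₁ ih₂ => exact mp _ _ ih₁ ih₂
  | necBox _ _ ih => exact necF _ ih
  | necF _ _ ih => exact necF _ (necFa _ ih)
  | necP _ _ ih => exact necFa _ (necP _ ih)

end MS4t

structure MS4tFrame (W : Type) where
  R : W → W → Prop
  E : W → W → Prop
  R_refl : ∀ w, R w w
  R_trans : ∀ {u v w}, R u v → R v w → R u w
  E_equiv : Equivalence E
  exists_R_E_of_E_R : ∀ {u v w}, E u v → R v w → ∃ v', R u v' ∧ E v' w

namespace MS4tFrame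

variable {W : Type} (M : MS4tFrame W) (V : ℕ → W → Prop)

def Sat : W → AForm → Prop
  | w, .var n => V n w
  | _, .bot => False
  | w, .and φ ψ => Sat w φ ∧ Sat w ψ
  | w, .or φ ψ => Sat w φ ∨ Sat w ψ
  | w, .imp φ ψ => Sat w φ → Sat w ψ
  | w, .boxF φ => ∀ v, M.R w v → Sat v φ
  | w, .boxP φ => ∀ v, M.R v w → Sat v φ
  | w, .fa φ => ∀ v, M.E w v → Sat v φ

end MS4tFrame

theorem MS4t.sound {φ : AForm} (h : MS4t φ) {W : Type} (M : MS4tFrame W) (V : ℕ → W → Prop)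
    (w : W) : M.Sat V w φ := by
  induction h generalizing w with
  | a1 | a2 | a3 | a4 | a5 | a6 | a7 | a8 | a9 | dne =>
    simp only [MS4tFrame.Sat, AForm.neg]; tauto
  | bFK | bPK | faK => exact fun hk hφ v hv => hk v hv (hφ v hv)
  | bFT | bPT => exact fun h => h w (M.R_refl w)
  | bF4 => exact fun h v hv u hu => h u (M.R_trans hv hu)
  | bP4 => exact fun h v hv u hu => h u (M.R_trans hu hv)
  | tense1 | tense2 => exact fun hφ v hv hall => hall w hv hφ
  | faT => exact fun h => h w (M.E_equiv.refl w)
  | fa4 => exact fun h v hv u hu => h u (M.E_equiv.trans hv hu)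
  | faB => exact fun hφ v hv hall => hall w (M.E_equiv.symm hv) hφ
  | comm =>
    intro h v hv u hu
    obtain ⟨v', hv', hu'⟩ := M.exists_R_E_of_E_R hv hu
    exact h v' hv' u hu'
  | mp _ _ _ _ ih₁ ih₂ => exact ih₁ w (ih₂ w)
  | necF _ _ ih | necP _ _ ih | necFa _ _ ih => exact fun v _ => ih v

namespace TS4

open NormalModality

theorem box_mem_of_bF_mem {w : calculus.World} {φ : TForm} (h : φ.bF ∈ w.1) : φ.box ∈ w.1 := by
  by_contra hbox
  have hdia : bFModality.dia (calculus.neg φ) ∈ w.1 :=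
    w.2.mem_of_imp_mem (w.2.mem_of_provable (conn1 _)) ((dia_neg_mem_iff (B := boxModality)).2 hbox)
  exact dia_neg_mem_iff.1 hdia h

def bFEquiv (w v : calculus.World) : Prop := bFModality.rel w v ∧ bFModality.rel v w

theorem bFRel_trans {u v w : calculus.World} : bFModality.rel u v → bFModality.rel v w →
    bFModality.rel u w :=
  rel_trans bF4

theorem bFEquiv_equivalence : Equivalence bFEquiv where
  refl w := ⟨rel_refl bFT w, rel_refl bFT w⟩
  symm h := ⟨h.2, h.1⟩
  trans h₁ h₂ := ⟨bFRel_trans h₁.1 h₂.1, bFRel_trans h₂.2 h₁.2⟩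

theorem bFRel_of_boxRel {w v : calculus.World} (h : boxModality.rel w v) : bFModality.rel w v :=
  fun _ hφ => h _ (box_mem_of_bF_mem hφ)

theorem bPRel_iff_bFRel {w v : calculus.World} : bPModality.rel w v ↔ bFModality.rel v w :=
  ⟨rel_swap_of_tense tense1, rel_swap_of_tense tense2⟩

theorem dF_and_dP_mono {δ δ' : TForm} (h : TS4 (δ.imp δ')) :
    TS4 ((δ.dF.and δ.dP).imp (δ'.dF.and δ'.dP)) :=
  calculus.imp_and (calculus.imp_trans (a3 _ _) (bFModality.dia_mono h))
    (calculus.imp_trans (a4 _ _) (bPModality.dia_mono h))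

-- Each member is consistent by the second connecting axiom, and the family is directed because
-- `v` is closed under conjunction.
theorem consistent_iUnion_of_bFRel {w v : calculus.World} (h : bFModality.rel w v) :
    calculus.Consistent (⋃ δ : v.1, insert (δ.1.dF.and δ.1.dP) {ψ | ψ.box ∈ w.1}) := by
  have := v.2.nonempty.to_subtype
  refine consistent_iUnion (fun δ₁ δ₂ => ?_) fun δ => ?_
  · refine ⟨⟨δ₁.1.and δ₂.1, v.2.and_mem_iff.2 ⟨δ₁.2, δ₂.2⟩⟩, ?_⟩
    rintro ψ ((rfl | hψ) | (rfl | hψ))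
    · exact .mp (.ax (dF_and_dP_mono (a3 _ _))) (.hyp (Set.mem_insert _ _))
    · exact .hyp (Set.mem_insert_of_mem _ hψ)
    · exact .mp (.ax (dF_and_dP_mono (a4 _ _))) (.hyp (Set.mem_insert _ _))
    · exact .hyp (Set.mem_insert_of_mem _ hψ)
  · exact consistent_insert_of_dia_mem (B := boxModality)
      (w.2.mem_of_imp_mem (w.2.mem_of_provable (conn2 _)) (dia_mem_of_rel h δ.2))

theorem exists_boxRel_bFEquiv {w v : calculus.World} (h : bFModality.rel w v) :
    ∃ u, boxModality.rel w u ∧ bFEquiv u v := by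
  obtain ⟨Θ, hsub, hΘ⟩ := exists_maxConsistent_superset (consistent_iUnion_of_bFRel h)
  have hmem : ∀ δ ∈ v.1, δ.dF ∈ Θ ∧ δ.dP ∈ Θ := fun δ hδ =>
    hΘ.and_mem_iff.1 (hsub (Set.mem_iUnion.2 ⟨⟨δ, hδ⟩, Set.mem_insert _ _⟩))
  obtain ⟨δ, hδ⟩ := v.2.nonempty
  refine ⟨⟨Θ, hΘ⟩, fun ψ hψ => hsub (Set.mem_iUnion.2 ⟨⟨δ, hδ⟩, Set.mem_insert_of_mem _ hψ⟩),
    rel_of_forall_dia_mem fun δ hδ => (hmem δ hδ).1,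
    bPRel_iff_bFRel.1 (rel_of_forall_dia_mem fun δ hδ => (hmem δ hδ).2)⟩

theorem bFRel_iff_exists {w u : calculus.World} :
    bFModality.rel w u ↔ ∃ v, boxModality.rel w v ∧ bFEquiv v u :=
  ⟨exists_boxRel_bFEquiv, fun ⟨_, hv, hvu⟩ => bFRel_trans (bFRel_of_boxRel hv) hvu.1⟩

theorem bPRel_iff_exists {w u : calculus.World} :
    bPModality.rel w u ↔ ∃ v, bFEquiv w v ∧ boxModality.rel u v := by
  rw [bPRel_iff_bFRel, bFRel_iff_exists]
  exact exists_congr fun v => ⟨fun ⟨h₁, h₂⟩ => ⟨bFEquiv_equivalence.symm h₂, h₁⟩,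
    fun ⟨h₁, h₂⟩ => ⟨h₂, bFEquiv_equivalence.symm h₁⟩⟩

def canonicalFrame : MS4tFrame calculus.World where
  R := boxModality.rel
  E := bFEquiv
  R_refl := rel_refl boxT
  R_trans := rel_trans box4
  E_equiv := bFEquiv_equivalence
  exists_R_E_of_E_R hE hR := exists_boxRel_bFEquiv (bFRel_trans hE.1 (bFRel_of_boxRel hR))

theorem sat_dagger_iff_mem (φ : TForm) (w : calculus.World) :
    canonicalFrame.Sat (fun n w => TForm.var n ∈ w.1) w (dagger φ) ↔ φ ∈ w.1 := by
  induction φ generalizing w with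
  | var n => rfl
  | bot => exact ⟨False.elim, w.2.bot_not_mem⟩
  | and φ ψ ihφ ihψ => exact (and_congr (ihφ w) (ihψ w)).trans w.2.and_mem_iff.symm
  | or φ ψ ihφ ihψ => exact (or_congr (ihφ w) (ihψ w)).trans w.2.or_mem_iff.symm
  | imp φ ψ ihφ ihψ => exact (imp_congr (ihφ w) (ihψ w)).trans w.2.imp_mem_iff.symm
  | box φ ih =>
    exact (forall₂_congr fun v _ => ih v).trans (box_mem_iff (B := boxModality)).symm
  | bF φ ih =>
    refine Iff.trans ?_ (box_mem_iff (B := bFModality)).symm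
    simp only [bFRel_iff_exists, forall_exists_index, and_imp]
    exact ⟨fun h u v hv hvu => (ih u).1 (h v hv u hvu), fun h v hv u hvu => (ih u).2 (h u v hv hvu)⟩
  | bP φ ih =>
    refine Iff.trans ?_ (box_mem_iff (B := bPModality)).symm
    simp only [bPRel_iff_exists, forall_exists_index, and_imp]
    exact ⟨fun h u v hv hvu => (ih u).1 (h v hv u hvu), fun h v hv u hvu => (ih u).2 (h u v hv hvu)⟩

end TS4

/-- The translation `(−)^†` of `TS4` into `MS4.t` is full and
faithful: `TS4 ⊢ φ` iff `MS4.t ⊢ φ^†`. -/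
theorem dagger_full_and_faithful (φ : TForm) : TS4 φ ↔ MS4t (dagger φ) := by
  refine ⟨MS4t.dagger_of_TS4, fun h => ?_⟩
  by_contra hφ
  obtain ⟨Γ, hΓ, hφΓ⟩ := exists_maxConsistent_not_mem (S := TS4.calculus) hφ
  exact hφΓ ((TS4.sat_dagger_iff_mem φ ⟨Γ, hΓ⟩).1 (h.sound _ _ _))
end

section
/- For every formula χ of the language L∀∃, MS4.t ⊢ χ^{t#} ↔ χ^{♮†}; that is, the composition of the Gödel translation with (−)^# and the composition of (−)^♮ with (−)^† agree up to logical equivalence in MS4.t. -/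
/-- Formulas of the monadic intuitionistic language `L∀∃`. -/
inductive MForm : Type
  | var : Nat → MForm
  | bot : MForm
  | and : MForm → MForm → MForm
  | or  : MForm → MForm → MForm
  | imp : MForm → MForm → MForm
  | all : MForm → MForm
  | ex  : MForm → MForm

/-- Intuitionistic negation `¬φ := φ → ⊥`. -/
def MForm.neg (φ : MForm) : MForm := φ.imp MForm.bot

/-- Biconditional `φ ↔ ψ := (φ → ψ) ∧ (ψ → φ)`. -/
def MForm.iff (φ ψ : MForm) : MForm := (φ.imp ψ).and (ψ.imp φ)

/-- The translation `(−)^{t#} : L∀∃ → L_T∀` (the Gödel translation followed by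
`(−)^#`), with `(∃φ)^{t#} = ∃φ^{t#}`. -/
def tsharp : MForm → AForm
  | .var n => (AForm.var n).boxF
  | .bot => AForm.bot
  | .and φ ψ => (tsharp φ).and (tsharp ψ)
  | .or φ ψ => (tsharp φ).or (tsharp ψ)
  | .imp φ ψ => (((tsharp φ).neg).or (tsharp ψ)).boxF
  | .all φ => ((tsharp φ).fa).boxF
  | .ex φ => (tsharp φ).exq

/-- The translation `(−)^{♮†} : L∀∃ → L_T∀` (the translation `(−)^♮` followed by
`(−)^†`), with `(∃φ)^{♮†} = ¬∀□_P¬φ^{♮†}`. -/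
def natdag : MForm → AForm
  | .var n => (AForm.var n).boxF
  | .bot => AForm.bot
  | .and φ ψ => (natdag φ).and (natdag ψ)
  | .or φ ψ => (natdag φ).or (natdag ψ)
  | .imp φ ψ => (((natdag φ).neg).or (natdag ψ)).boxF
  | .all φ => ((natdag φ).fa).boxF
  | .ex φ => ((((natdag φ).neg).boxP).fa).neg

/-! ### Auxiliary machinery -/

namespace MS4tAux

open AForm

/-- Derivations from a list of hypotheses (for the deduction theorem). -/
inductive Der : List AForm → AForm → Prop
  | ax {Γ φ} : MS4t φ → Der Γ φ
  | hyp {Γ φ} : φ ∈ Γ → Der Γ φ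
  | mp {Γ φ ψ} : Der Γ (φ.imp ψ) → Der Γ φ → Der Γ ψ

lemma impId (φ : AForm) : MS4t (φ.imp φ) :=
  .mp _ _ (.mp _ _ (.a2 φ (φ.imp φ) φ) (.a1 φ (φ.imp φ))) (.a1 φ φ)

lemma Der.ded' {Δ ψ} (h : Der Δ ψ) : ∀ φ Γ, Δ = φ :: Γ → Der Γ (φ.imp ψ) := by
  induction h with
  | ax h => intro φ Γ _; exact .mp (.ax (.a1 _ _)) (.ax h)
  | hyp hm =>
    intro φ Γ hΔ; subst hΔ
    rcases List.mem_cons.mp hm with h | h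
    · subst h; exact .ax (impId _)
    · exact .mp (.ax (.a1 _ _)) (.hyp h)
  | mp _ _ ih1 ih2 =>
    intro φ Γ hΔ
    exact .mp (.mp (.ax (.a2 _ _ _)) (ih1 φ Γ hΔ)) (ih2 φ Γ hΔ)

lemma Der.ded {Γ φ ψ} (h : Der (φ :: Γ) ψ) : Der Γ (φ.imp ψ) := h.ded' φ Γ rfl

lemma thm_of_der {φ} (h : Der [] φ) : MS4t φ := by
  induction h with
  | ax h => exact h
  | hyp hm => simp at hm
  | mp _ _ ih1 ih2 => exact .mp _ _ ih1 ih2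

lemma impTrans {a b c : AForm} (h1 : MS4t (a.imp b)) (h2 : MS4t (b.imp c)) :
    MS4t (a.imp c) := by
  apply thm_of_der; apply Der.ded
  exact .mp (.ax h2) (.mp (.ax h1) (.hyp (by simp [AForm.neg])))

lemma contrap {a b : AForm} (h : MS4t (a.imp b)) : MS4t (b.neg.imp a.neg) := by
  apply thm_of_der; apply Der.ded; apply Der.ded
  exact .mp (.hyp (by simp [AForm.neg])) (.mp (.ax h) (.hyp (by simp [AForm.neg])))

lemma dni (a : AForm) : MS4t (a.imp a.neg.neg) := by
  apply thm_of_der; apply Der.ded; apply Der.ded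
  have h1 : Der [a.neg, a] a.neg := .hyp (by simp)
  have h2 : Der [a.neg, a] a := .hyp (by simp)
  exact .mp h1 h2

lemma andI {a b : AForm} (h1 : MS4t a) (h2 : MS4t b) : MS4t (a.and b) :=
  .mp _ _ (.mp _ _ (.a5 a b) h1) h2

lemma andImpAnd {a b c d : AForm} (h1 : MS4t (a.imp c)) (h2 : MS4t (b.imp d)) :
    MS4t ((a.and b).imp (c.and d)) := by
  apply thm_of_der; apply Der.ded
  exact .mp (.mp (.ax (.a5 c d)) (.mp (.ax h1) (.mp (.ax (.a3 a b)) (.hyp (by simp [AForm.neg])))))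
    (.mp (.ax h2) (.mp (.ax (.a4 a b)) (.hyp (by simp [AForm.neg]))))

lemma orImpOr {a b c d : AForm} (h1 : MS4t (a.imp c)) (h2 : MS4t (b.imp d)) :
    MS4t ((a.or b).imp (c.or d)) :=
  .mp _ _ (.mp _ _ (.a8 a b (c.or d)) (impTrans h1 (.a6 c d))) (impTrans h2 (.a7 c d))

lemma regF {a b : AForm} (h : MS4t (a.imp b)) : MS4t (a.boxF.imp b.boxF) :=
  .mp _ _ (.bFK a b) (.necF _ h)

lemma regP {a b : AForm} (h : MS4t (a.imp b)) : MS4t (a.boxP.imp b.boxP) :=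
  .mp _ _ (.bPK a b) (.necP _ h)

lemma regFa {a b : AForm} (h : MS4t (a.imp b)) : MS4t (a.fa.imp b.fa) :=
  .mp _ _ (.faK a b) (.necFa _ h)

lemma monoDiaP {a b : AForm} (h : MS4t (a.imp b)) : MS4t (a.diaP.imp b.diaP) :=
  contrap (regP (contrap h))

lemma monoDiaF {a b : AForm} (h : MS4t (a.imp b)) : MS4t (a.diaF.imp b.diaF) :=
  contrap (regF (contrap h))

lemma monoEx {a b : AForm} (h : MS4t (a.imp b)) : MS4t (a.exq.imp b.exq) :=
  contrap (regFa (contrap h))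

/-- Counit of the adjunction `◇_P ⊣ □_F`: `◇_P□_F b → b`. -/
lemma counitPF (b : AForm) : MS4t (b.boxF.diaP.imp b) := by
  -- tense1 at ¬b : ¬b → □_P ◇_F ¬b, contraposed.
  have h1 : MS4t (b.neg.imp ((b.neg.diaF).boxP)) := .tense1 b.neg
  have h2 : MS4t ((((b.neg.diaF).boxP).neg).imp b.neg.neg) := contrap h1
  -- ◇_P□_F b → ◇_P □_F ¬¬b  (note (¬b).diaF = ¬□_F¬¬b, so its boxP's neg is ◇_P□_F¬¬b)
  have h3 : MS4t ((b.boxF.diaP).imp (((b.neg.diaF).boxP).neg)) :=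
    contrap (regP (contrap (regF (dni b))))
  exact impTrans h3 (impTrans h2 (.dne b))

/-- `◇_P`-stability: if `a → □_F a` then `¬a → □_P ¬a`. -/
lemma negBoxP {a : AForm} (st : MS4t (a.imp a.boxF)) :
    MS4t (a.neg.imp (a.neg.boxP)) := by
  have h1 : MS4t (a.diaP.imp a) := impTrans (monoDiaP st) (counitPF a)
  -- contrapositive: ¬a → ¬◇_P a = ¬¬□_P¬a, then dne
  exact impTrans (contrap h1) (.dne (a.neg.boxP))

/-! #### `iff` machinery -/

lemma iffI {a b : AForm} (h1 : MS4t (a.imp b)) (h2 : MS4t (b.imp a)) :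
    MS4t (a.iff b) := andI h1 h2

lemma iff1 {a b : AForm} (h : MS4t (a.iff b)) : MS4t (a.imp b) :=
  .mp _ _ (.a3 _ _) h

lemma iff2 {a b : AForm} (h : MS4t (a.iff b)) : MS4t (b.imp a) :=
  .mp _ _ (.a4 _ _) h

lemma iffRefl (a : AForm) : MS4t (a.iff a) := iffI (impId a) (impId a)

lemma negCongr {a b : AForm} (h : MS4t (a.iff b)) : MS4t (a.neg.iff b.neg) :=
  iffI (contrap (iff2 h)) (contrap (iff1 h))

lemma boxFCongr {a b : AForm} (h : MS4t (a.iff b)) : MS4t (a.boxF.iff b.boxF) :=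
  iffI (regF (iff1 h)) (regF (iff2 h))

lemma faCongr {a b : AForm} (h : MS4t (a.iff b)) : MS4t (a.fa.iff b.fa) :=
  iffI (regFa (iff1 h)) (regFa (iff2 h))

lemma andCongr {a b c d : AForm} (h1 : MS4t (a.iff c)) (h2 : MS4t (b.iff d)) :
    MS4t ((a.and b).iff (c.and d)) :=
  iffI (andImpAnd (iff1 h1) (iff1 h2)) (andImpAnd (iff2 h1) (iff2 h2))

lemma orCongr {a b c d : AForm} (h1 : MS4t (a.iff c)) (h2 : MS4t (b.iff d)) :
    MS4t ((a.or b).iff (c.or d)) :=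
  iffI (orImpOr (iff1 h1) (iff1 h2)) (orImpOr (iff2 h1) (iff2 h2))

/-! #### S5 lemmas for `∀` -/

/-- `∃∃p → ∃p`. -/
lemma exEx (p : AForm) : MS4t (p.exq.exq.imp p.exq) := by
  -- ∀¬p → ∀¬¬∀¬p, then contrapose
  have h1 : MS4t ((p.neg.fa).imp ((p.neg.fa).neg.neg.fa)) :=
    impTrans (.fa4 p.neg) (regFa (dni p.neg.fa))
  exact contrap h1

/-- `∃p → ∀∃p`. -/
lemma ex5 (p : AForm) : MS4t (p.exq.imp p.exq.fa) :=
  impTrans (.faB p.exq) (regFa (exEx p))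

/-- `¬∀s → ∀¬∀s`. -/
lemma notFaFa (s : AForm) : MS4t ((s.fa.neg).imp (s.fa.neg.fa)) := by
  have h1 : MS4t ((s.fa.neg).imp s.neg.exq) := contrap (regFa (.dne s))
  have h2 : MS4t (s.neg.exq.imp (s.neg.exq.fa)) := ex5 s.neg
  have h3 : MS4t (s.neg.exq.imp s.fa.neg) := contrap (regFa (dni s))
  exact impTrans h1 (impTrans h2 (regFa h3))

/-- `∃∀s → ∀s`. -/
lemma exFa (s : AForm) : MS4t ((s.fa.exq).imp s.fa) := by
  have h1 : MS4t ((s.fa.neg).imp (s.fa.exq).neg) :=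
    impTrans (notFaFa s) (dni (s.fa.neg.fa))
  exact impTrans (dni (s.fa.exq)) (impTrans (contrap h1) (.dne s.fa))

/-- Dual of the commutativity axiom: `∃◇_F q → ◇_F ∃q`. -/
lemma commD (q : AForm) : MS4t ((q.diaF.exq).imp (q.exq.diaF)) := by
  have hcomm : MS4t ((q.neg.fa.boxF).imp (q.neg.boxF.fa)) := .comm q.neg
  have h1 : MS4t ((q.diaF.exq).imp (q.neg.boxF.fa).neg) :=
    contrap (regFa (dni (q.neg.boxF)))
  have h2 : MS4t ((q.neg.boxF.fa).neg.imp (q.neg.fa.boxF).neg) := contrap hcomm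
  have h3 : MS4t ((q.neg.fa.boxF).neg.imp (q.exq.diaF)) :=
    contrap (regF (.dne q.neg.fa))
  exact impTrans h1 (impTrans h2 h3)

/-- `◇_F∀q → ∀◇_F q`. -/
lemma lemH (q : AForm) : MS4t ((q.fa.diaF).imp (q.diaF.fa)) := by
  have hcl : MS4t ((q.fa.diaF.exq).imp (q.fa.diaF)) :=
    impTrans (commD q.fa) (monoDiaF (exFa q))
  have hstab : MS4t ((q.fa.diaF).imp (q.fa.diaF.fa)) :=
    impTrans (.faB (q.fa.diaF)) (regFa hcl)
  exact impTrans hstab (regFa (monoDiaF (.faT q)))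

/-- `∃□_F p → □_F ∃p`. -/
lemma lemG (p : AForm) : MS4t ((p.boxF.exq).imp (p.exq.boxF)) := by
  have h1 : MS4t ((p.neg.diaF.fa).imp (p.boxF.neg.fa)) :=
    regFa (contrap (regF (dni p)))
  have h2 : MS4t ((p.boxF.exq).imp (p.neg.diaF.fa).neg) := contrap h1
  have h3 : MS4t ((p.neg.diaF.fa).neg.imp (p.neg.fa.diaF).neg) :=
    contrap (lemH p.neg)
  -- ¬◇_F∀¬p = ¬¬□_F¬∀¬p = ¬¬□_F ∃p → □_F ∃p
  have h4 : MS4t ((p.neg.fa.diaF).neg.imp (p.exq.boxF)) := .dne (p.exq.boxF)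
  exact impTrans h2 (impTrans h3 h4)

/-! #### Stability of `tsharp` -/

lemma boxFAndCollect (a b : AForm) :
    MS4t ((a.boxF.and b.boxF).imp ((a.and b).boxF)) := by
  have h : MS4t (a.boxF.imp ((b.imp (a.and b)).boxF)) := regF (.a5 a b)
  have h2 : MS4t (a.boxF.imp (b.boxF.imp ((a.and b).boxF))) :=
    impTrans h (.bFK b (a.and b))
  apply thm_of_der; apply Der.ded
  exact .mp (.mp (.ax h2) (.mp (.ax (.a3 a.boxF b.boxF)) (.hyp (by simp [AForm.neg]))))
    (.mp (.ax (.a4 a.boxF b.boxF)) (.hyp (by simp [AForm.neg])))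

lemma boxFOrCollect (a b : AForm) :
    MS4t ((a.boxF.or b.boxF).imp ((a.or b).boxF)) :=
  .mp _ _ (.mp _ _ (.a8 a.boxF b.boxF ((a.or b).boxF)) (regF (.a6 a b))) (regF (.a7 a b))

lemma tsharpStable (χ : MForm) : MS4t ((tsharp χ).imp (tsharp χ).boxF) := by
  induction χ with
  | var n => exact .bF4 _
  | bot => exact .a9 _
  | and φ ψ ih1 ih2 => exact impTrans (andImpAnd ih1 ih2) (boxFAndCollect _ _)
  | or φ ψ ih1 ih2 => exact impTrans (orImpOr ih1 ih2) (boxFOrCollect _ _)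
  | imp φ ψ _ _ => exact .bF4 _
  | all φ _ => exact .bF4 _
  | ex φ ih => exact impTrans (monoEx ih) (lemG (tsharp φ))

end MS4tAux

open MS4tAux in
/-- For every `L∀∃`-formula `χ`, `MS4.t ⊢ χ^{t#} ↔ χ^{♮†}`. -/
theorem tsharp_equiv_natdag (χ : MForm) : MS4t ((tsharp χ).iff (natdag χ)) := by
  induction χ with
  | var n => exact iffRefl _
  | bot => exact iffRefl _
  | and φ ψ ih1 ih2 => exact andCongr ih1 ih2
  | or φ ψ ih1 ih2 => exact orCongr ih1 ih2
  | imp φ ψ ih1 ih2 => exact boxFCongr (orCongr (negCongr ih1) ih2)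
  | all φ ih => exact boxFCongr (faCongr ih)
  | ex φ ih =>
    set a := tsharp φ with ha
    set b := natdag φ with hb
    have st : MS4t (a.imp a.boxF) := tsharpStable φ
    have stb : MS4t (b.imp b.boxF) :=
      impTrans (iff2 ih) (impTrans st (regF (iff1 ih)))
    have fwd : MS4t (a.neg.imp (b.neg.boxP)) :=
      impTrans (contrap (iff2 ih)) (negBoxP stb)
    have bwd : MS4t ((b.neg.boxP).imp a.neg) :=
      impTrans (.bPT b.neg) (contrap (iff1 ih))
    exact negCongr (faCongr (iffI fwd bwd))
end

section
/- TS4 is sound and complete with respect to TS4-frames: TS4 ⊢ φ if and only if φ is valid in every TS4-frame. -/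
/-- `(X,R,Q)` is a TS4-frame: `R`, `Q` are quasi-orders, `R ⊆ Q`, and `xQy`
implies there is `z` with `xRz` and `z E_Q y`. -/
structure IsTS4Frame {X : Type} (R Q : X → X → Prop) : Prop where
  rrefl : ∀ x, R x x
  rtrans : ∀ x y z, R x y → R y z → R x z
  qrefl : ∀ x, Q x x
  qtrans : ∀ x y z, Q x y → Q y z → Q x z
  rsubq : ∀ x y, R x y → Q x y
  pass : ∀ x y, Q x y → ∃ z, R x z ∧ Q z y ∧ Q y z

/-- Satisfaction in a TS4-frame: `□` is interpreted via `R`-successors, `■_F`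
via `Q`-successors and `■_P` via `Q`-predecessors. -/
def tsat {X : Type} (R Q : X → X → Prop) (v : Nat → Set X) : TForm → X → Prop
  | .var n, x => x ∈ v n
  | .bot, _ => False
  | .and φ ψ, x => tsat R Q v φ x ∧ tsat R Q v ψ x
  | .or φ ψ, x => tsat R Q v φ x ∨ tsat R Q v ψ x
  | .imp φ ψ, x => tsat R Q v φ x → tsat R Q v ψ x
  | .box φ, x => ∀ y, R x y → tsat R Q v φ y
  | .bF φ, x => ∀ y, Q x y → tsat R Q v φ y
  | .bP φ, x => ∀ y, Q y x → tsat R Q v φ y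

/-- Validity in a TS4-frame. -/
def tValid {X : Type} (R Q : X → X → Prop) (φ : TForm) : Prop :=
  ∀ (v : Nat → Set X) (x : X), tsat R Q v φ x

/-!
Soundness is a routine induction on derivations. For completeness we use the canonical model on
maximal consistent sets, where `x R y` means that `φ ∈ y` whenever `□φ ∈ x`, and `Q` is defined
likewise from `■_F`; the tense axioms make the `■_P`-relation the converse of `Q`, and
`◇p → ◆_F p` gives `R ⊆ Q`. The pass condition comes from `◆_F p → ◇(◆_F p ∧ ◆_P p)`: if `x Q y`,
then every `p ∈ y` gives `◇(◆_F p ∧ ◆_P p) ∈ x`, and these formulas form a directed family, so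
some `R`-successor `z` of `x` contains all of them. Since `◆_P ■_F χ → χ` and `◆_F ■_P χ → χ` are
theorems, `z` is then `Q`-equivalent to `y`.
-/

namespace TS4

open TForm

theorem imp_self (φ : TForm) : TS4 (φ.imp φ) :=
  mp _ _ (mp _ _ (a2 φ (φ.imp φ) φ) (a1 φ (φ.imp φ))) (a1 φ φ)

/-- Derivability from hypotheses `Γ`; necessitation enters only through theorems `TS4 φ`, which is
what makes the deduction theorem hold. -/
inductive Deriv (Γ : Set TForm) : TForm → Prop
  | hyp {φ : TForm} : φ ∈ Γ → Deriv Γ φ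
  | thm {φ : TForm} : TS4 φ → Deriv Γ φ
  | mp {φ ψ : TForm} : Deriv Γ (φ.imp ψ) → Deriv Γ φ → Deriv Γ ψ

namespace Deriv

variable {Γ Δ : Set TForm} {φ ψ : TForm}

theorem mono (h : Γ ⊆ Δ) (hd : Deriv Γ φ) : Deriv Δ φ := by
  induction hd with
  | hyp hφ => exact hyp (h hφ)
  | thm hφ => exact thm hφ
  | mp _ _ ih₁ ih₂ => exact mp ih₁ ih₂

theorem weaken (ψ : TForm) (hd : Deriv Γ φ) : Deriv Γ (ψ.imp φ) :=
  mp (thm (a1 φ ψ)) hd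

theorem deduction (hd : Deriv (insert φ Γ) ψ) : Deriv Γ (φ.imp ψ) := by
  induction hd with
  | hyp hψ =>
    rcases hψ with rfl | hψ
    · exact thm (TS4.imp_self _)
    · exact (hyp hψ).weaken _
  | thm hψ => exact (thm hψ).weaken _
  | mp _ _ ih₁ ih₂ => exact mp (mp (thm (a2 _ _ _)) ih₁) ih₂

theorem provable_of_empty (hd : Deriv ∅ φ) : TS4 φ := by
  induction hd with
  | hyp h => exact absurd h (Set.notMem_empty _)
  | thm h => exact h
  | mp _ _ ih₁ ih₂ => exact TS4.mp _ _ ih₁ ih₂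

theorem exists_mem_of_sUnion {c : Set (Set TForm)} (hc : IsChain (· ⊆ ·) c) (hne : c.Nonempty)
    (hd : Deriv (⋃₀ c) φ) : ∃ Γ ∈ c, Deriv Γ φ := by
  induction hd with
  | hyp h => obtain ⟨Γ, hΓ, h⟩ := h; exact ⟨Γ, hΓ, hyp h⟩
  | thm h => obtain ⟨Γ, hΓ⟩ := hne; exact ⟨Γ, hΓ, thm h⟩
  | mp _ _ ih₁ ih₂ =>
    obtain ⟨Γ₁, h₁, d₁⟩ := ih₁
    obtain ⟨Γ₂, h₂, d₂⟩ := ih₂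
    rcases hc.total h₁ h₂ with h | h
    · exact ⟨Γ₂, h₂, mp (d₁.mono h) d₂⟩
    · exact ⟨Γ₁, h₁, mp d₁ (d₂.mono h)⟩

theorem exists_imp_of_union {A S : Set TForm} (hne : S.Nonempty)
    (hS : DirectedOn (fun s t => TS4 (t.imp s)) S) (hd : Deriv (A ∪ S) φ) :
    ∃ s ∈ S, Deriv A (s.imp φ) := by
  obtain ⟨s₀, hs₀⟩ := hne
  induction hd with
  | hyp h =>
    rcases h with h | h
    · exact ⟨s₀, hs₀, (hyp h).weaken _⟩
    · exact ⟨_, h, thm (TS4.imp_self _)⟩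
  | thm h => exact ⟨s₀, hs₀, (thm h).weaken _⟩
  | mp _ _ ih₁ ih₂ =>
    obtain ⟨s₁, hs₁, d₁⟩ := ih₁
    obtain ⟨s₂, hs₂, d₂⟩ := ih₂
    obtain ⟨s, hs, h₁, h₂⟩ := hS s₁ hs₁ s₂ hs₂
    have hs' : Deriv (insert s A) s := hyp (Set.mem_insert _ _)
    have hA : A ⊆ insert s A := Set.subset_insert _ _
    exact ⟨s, hs, deduction (mp (mp (d₁.mono hA) (mp (thm h₁) hs'))
      (mp (d₂.mono hA) (mp (thm h₂) hs')))⟩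

end Deriv

def Consistent (Γ : Set TForm) : Prop := ¬ Deriv Γ .bot

def MaxConsistent (Γ : Set TForm) : Prop := Maximal Consistent Γ

theorem exists_maxConsistent_superset {Γ : Set TForm} (hΓ : Consistent Γ) :
    ∃ Δ, Γ ⊆ Δ ∧ MaxConsistent Δ :=
  zorn_subset_nonempty {Δ | Consistent Δ}
    (fun c hcS hc hne => ⟨⋃₀ c,
      fun hd => by obtain ⟨Δ, hΔ, d⟩ := Deriv.exists_mem_of_sUnion hc hne hd; exact hcS hΔ d,
      fun _ => Set.subset_sUnion_of_mem⟩) Γ hΓ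

namespace MaxConsistent

variable {Γ : Set TForm} {φ ψ : TForm}

theorem deriv_neg_of_notMem (hΓ : MaxConsistent Γ) (h : φ ∉ Γ) : Deriv Γ φ.neg :=
  Deriv.deduction (not_not.1 fun hcon => h (hΓ.2 hcon (Set.subset_insert _ _) (Set.mem_insert _ _)))

theorem mem_of_deriv (hΓ : MaxConsistent Γ) (hd : Deriv Γ φ) : φ ∈ Γ := by
  by_contra h
  exact hΓ.1 (.mp (hΓ.deriv_neg_of_notMem h) hd)

theorem mem_of_provable (hΓ : MaxConsistent Γ) (h : TS4 φ) : φ ∈ Γ :=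
  hΓ.mem_of_deriv (.thm h)

theorem mem_of_imp_mem (hΓ : MaxConsistent Γ) (h₁ : φ.imp ψ ∈ Γ) (h₂ : φ ∈ Γ) : ψ ∈ Γ :=
  hΓ.mem_of_deriv (.mp (.hyp h₁) (.hyp h₂))

theorem bot_notMem (hΓ : MaxConsistent Γ) : TForm.bot ∉ Γ :=
  fun h => hΓ.1 (.hyp h)

theorem neg_mem_iff (hΓ : MaxConsistent Γ) : φ.neg ∈ Γ ↔ φ ∉ Γ :=
  ⟨fun hn h => hΓ.bot_notMem (hΓ.mem_of_imp_mem hn h),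
    fun h => hΓ.mem_of_deriv (hΓ.deriv_neg_of_notMem h)⟩

theorem imp_mem_iff (hΓ : MaxConsistent Γ) : φ.imp ψ ∈ Γ ↔ (φ ∈ Γ → ψ ∈ Γ) := by
  refine ⟨hΓ.mem_of_imp_mem, fun h => ?_⟩
  by_cases hφ : φ ∈ Γ
  · exact hΓ.mem_of_imp_mem (hΓ.mem_of_provable (a1 ψ φ)) (h hφ)
  · have hneg : Deriv (insert φ Γ) φ.neg := .hyp (Set.mem_insert_of_mem _ (hΓ.neg_mem_iff.2 hφ))
    have hφ' : Deriv (insert φ Γ) φ := .hyp (Set.mem_insert _ _)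
    exact hΓ.mem_of_deriv (Deriv.deduction (.mp (.thm (a9 ψ)) (.mp hneg hφ')))

theorem and_mem_iff (hΓ : MaxConsistent Γ) : φ.and ψ ∈ Γ ↔ φ ∈ Γ ∧ ψ ∈ Γ :=
  ⟨fun h => ⟨hΓ.mem_of_imp_mem (hΓ.mem_of_provable (a3 φ ψ)) h,
      hΓ.mem_of_imp_mem (hΓ.mem_of_provable (a4 φ ψ)) h⟩,
    fun ⟨h₁, h₂⟩ => hΓ.mem_of_imp_mem (hΓ.mem_of_imp_mem (hΓ.mem_of_provable (a5 φ ψ)) h₁) h₂⟩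

theorem or_mem_iff (hΓ : MaxConsistent Γ) : φ.or ψ ∈ Γ ↔ φ ∈ Γ ∨ ψ ∈ Γ := by
  refine ⟨fun h => ?_, ?_⟩
  · by_contra! hc
    have hcases := hΓ.mem_of_provable (a8 φ ψ .bot)
    exact hΓ.bot_notMem (hΓ.mem_of_imp_mem (hΓ.mem_of_imp_mem (hΓ.mem_of_imp_mem hcases
      (hΓ.neg_mem_iff.2 hc.1)) (hΓ.neg_mem_iff.2 hc.2)) h)
  · rintro (h | h)
    · exact hΓ.mem_of_imp_mem (hΓ.mem_of_provable (a6 φ ψ)) h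
    · exact hΓ.mem_of_imp_mem (hΓ.mem_of_provable (a7 φ ψ)) h

end MaxConsistent

def Canonical : Type := {Γ : Set TForm // MaxConsistent Γ}

def canonicalRel (m : TForm → TForm) (x y : Canonical) : Prop := m ⁻¹' x.1 ⊆ y.1

def canonicalVal (n : ℕ) : Set Canonical := {x | var n ∈ x.1}

theorem of_forall_canonical {φ : TForm} (h : ∀ x : Canonical, φ ∈ x.1) : TS4 φ := by
  by_contra hφ
  have hcon : Consistent {φ.neg} := fun hd => by
    rw [← LawfulSingleton.insert_empty_eq] at hd
    exact hφ (mp _ _ (dne φ) (Deriv.deduction hd).provable_of_empty)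
  obtain ⟨Γ, hsub, hΓ⟩ := exists_maxConsistent_superset hcon
  exact hΓ.neg_mem_iff.1 (hsub rfl) (h ⟨Γ, hΓ⟩)

structure IsNormal (m : TForm → TForm) : Prop where
  k : ∀ φ ψ, TS4 ((m (φ.imp ψ)).imp ((m φ).imp (m ψ)))
  nec : ∀ φ, TS4 φ → TS4 (m φ)

theorem isNormal_box : IsNormal box := ⟨boxK, necBox⟩
theorem isNormal_bF : IsNormal bF := ⟨bFK, necF⟩
theorem isNormal_bP : IsNormal bP := ⟨bPK, necP⟩

/-- `dual box`, `dual bF` and `dual bP` unfold to `dia`, `dF` and `dP`. -/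
def dual (m : TForm → TForm) (φ : TForm) : TForm := (m φ.neg).neg

namespace IsNormal

variable {m : TForm → TForm} {φ : TForm}

theorem mem_of_deriv (hm : IsNormal m) (x : Canonical) (hd : Deriv (m ⁻¹' x.1) φ) : m φ ∈ x.1 := by
  induction hd with
  | hyp h => exact h
  | thm h => exact x.2.mem_of_provable (hm.nec _ h)
  | mp _ _ ih₁ ih₂ =>
    exact x.2.mem_of_imp_mem (x.2.mem_of_imp_mem (x.2.mem_of_provable (hm.k _ _)) ih₁) ih₂

theorem mem_iff (hm : IsNormal m) (x : Canonical) :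
    m φ ∈ x.1 ↔ ∀ y, canonicalRel m x y → φ ∈ y.1 := by
  refine ⟨fun h y hxy => hxy h, fun h => ?_⟩
  by_contra hφ
  have hcon : Consistent (insert φ.neg (m ⁻¹' x.1)) := fun hd =>
    hφ (hm.mem_of_deriv x (.mp (.thm (dne φ)) (Deriv.deduction hd)))
  obtain ⟨Δ, hsub, hΔ⟩ := exists_maxConsistent_superset hcon
  exact hΔ.neg_mem_iff.1 (hsub (Set.mem_insert _ _))
    (h ⟨Δ, hΔ⟩ fun _ hψ => hsub (Set.mem_insert_of_mem _ hψ))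

theorem dual_mem_iff (hm : IsNormal m) (x : Canonical) :
    dual m φ ∈ x.1 ↔ ∃ y, canonicalRel m x y ∧ φ ∈ y.1 := by
  simp only [dual, x.2.neg_mem_iff, hm.mem_iff x, not_forall, exists_prop]
  exact exists_congr fun y => and_congr_right fun _ => by rw [y.2.neg_mem_iff, not_not]

theorem dual_mono (hm : IsNormal m) {φ ψ : TForm} (h : TS4 (φ.imp ψ)) :
    TS4 ((dual m φ).imp (dual m ψ)) :=
  of_forall_canonical fun x => x.2.imp_mem_iff.2 fun hφ => by
    obtain ⟨y, hxy, hy⟩ := (hm.dual_mem_iff x).1 hφ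
    exact (hm.dual_mem_iff x).2 ⟨y, hxy, y.2.mem_of_imp_mem (y.2.mem_of_provable h) hy⟩

theorem exists_of_directed (hm : IsNormal m) {x : Canonical} {S : Set TForm} (hne : S.Nonempty)
    (hS : DirectedOn (fun s t => TS4 (t.imp s)) S) (hx : ∀ s ∈ S, dual m s ∈ x.1) :
    ∃ z, canonicalRel m x z ∧ S ⊆ z.1 := by
  have hcon : Consistent (m ⁻¹' x.1 ∪ S) := fun hd => by
    obtain ⟨s, hs, d⟩ := Deriv.exists_imp_of_union hne hS hd
    exact x.2.neg_mem_iff.1 (hx s hs) (hm.mem_of_deriv x d)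
  obtain ⟨Δ, hsub, hΔ⟩ := exists_maxConsistent_superset hcon
  exact ⟨⟨Δ, hΔ⟩, fun _ h => hsub (Or.inl h), fun _ h => hsub (Or.inr h)⟩

theorem canonicalRel_swap {n : TForm → TForm} (hm : IsNormal m)
    (hconv : ∀ ψ : TForm, TS4 (ψ.imp (n (dual m ψ)))) {x y : Canonical} (h : canonicalRel n x y) :
    canonicalRel m y x := by
  intro φ hφ
  by_contra hx
  have hn := x.2.mem_of_imp_mem (x.2.mem_of_provable (hconv φ.neg)) (x.2.neg_mem_iff.2 hx)
  obtain ⟨z, hyz, hz⟩ := (hm.dual_mem_iff y).1 (h hn)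
  exact z.2.neg_mem_iff.1 hz (hyz hφ)

end IsNormal

section CanonicalFrame

variable {x y z : Canonical}

theorem canonicalRel_refl {m : TForm → TForm} (hT : ∀ φ, TS4 ((m φ).imp φ)) (x : Canonical) :
    canonicalRel m x x :=
  fun φ hφ => x.2.mem_of_imp_mem (x.2.mem_of_provable (hT φ)) hφ

theorem canonicalRel_trans {m : TForm → TForm} (h4 : ∀ φ, TS4 ((m φ).imp (m (m φ))))
    (hxy : canonicalRel m x y) (hyz : canonicalRel m y z) : canonicalRel m x z :=
  fun φ hφ => hyz (hxy (x.2.mem_of_imp_mem (x.2.mem_of_provable (h4 φ)) hφ))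

theorem canonicalRel_bF_iff : canonicalRel bF x y ↔ canonicalRel bP y x :=
  ⟨isNormal_bP.canonicalRel_swap tense2, isNormal_bF.canonicalRel_swap tense1⟩

theorem canonicalRel_bF_of_box (h : canonicalRel box x y) : canonicalRel bF x y := by
  intro φ hφ
  apply h
  by_contra hbox
  obtain ⟨z, hxz, hz⟩ : ∃ z, canonicalRel box x z ∧ φ ∉ z.1 := by
    simpa using mt (isNormal_box.mem_iff x).2 hbox
  have hdia : φ.neg.dia ∈ x.1 := (isNormal_box.dual_mem_iff x).2 ⟨z, hxz, z.2.neg_mem_iff.2 hz⟩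
  obtain ⟨w, hxw, hw⟩ := (isNormal_bF.dual_mem_iff x).1
    (x.2.mem_of_imp_mem (x.2.mem_of_provable (conn1 φ.neg)) hdia)
  exact w.2.neg_mem_iff.1 hw (hxw hφ)

theorem mem_of_dP_bF_mem {χ : TForm} (h : χ.bF.dP ∈ z.1) : χ ∈ z.1 := by
  obtain ⟨u, hzu, hu⟩ := (isNormal_bP.dual_mem_iff z).1 h
  exact canonicalRel_bF_iff.2 hzu hu

theorem mem_of_dF_bP_mem {χ : TForm} (h : χ.bP.dF ∈ z.1) : χ ∈ z.1 := by
  obtain ⟨u, hzu, hu⟩ := (isNormal_bF.dual_mem_iff z).1 h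
  exact canonicalRel_bF_iff.1 hzu hu

theorem dF_and_dP_mono_s10 {p q : TForm} (h : TS4 (p.imp q)) :
    TS4 ((p.dF.and p.dP).imp (q.dF.and q.dP)) :=
  of_forall_canonical fun x => by
    rw [x.2.imp_mem_iff, x.2.and_mem_iff, x.2.and_mem_iff]
    exact fun ⟨hF, hP⟩ => ⟨x.2.mem_of_imp_mem (x.2.mem_of_provable (isNormal_bF.dual_mono h)) hF,
      x.2.mem_of_imp_mem (x.2.mem_of_provable (isNormal_bP.dual_mono h)) hP⟩

theorem canonical_pass (h : canonicalRel bF x y) :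
    ∃ z, canonicalRel box x z ∧ canonicalRel bF z y ∧ canonicalRel bF y z := by
  let θ : TForm → TForm := fun p => p.dF.and p.dP
  have hne : (θ '' y.1).Nonempty := ⟨_, _, y.2.mem_of_provable (TS4.imp_self .bot), rfl⟩
  have hdir : DirectedOn (fun s t => TS4 (t.imp s)) (θ '' y.1) := by
    rintro _ ⟨p, hp, rfl⟩ _ ⟨q, hq, rfl⟩
    exact ⟨θ (p.and q), ⟨_, y.2.and_mem_iff.2 ⟨hp, hq⟩, rfl⟩,
      dF_and_dP_mono_s10 (a3 p q), dF_and_dP_mono_s10 (a4 p q)⟩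
  have hdia : ∀ s ∈ θ '' y.1, s.dia ∈ x.1 := by
    rintro _ ⟨p, hp, rfl⟩
    exact x.2.mem_of_imp_mem (x.2.mem_of_provable (conn2 p))
      ((isNormal_bF.dual_mem_iff x).2 ⟨y, h, hp⟩)
  obtain ⟨z, hxz, hz⟩ := isNormal_box.exists_of_directed hne hdir hdia
  refine ⟨z, hxz, canonicalRel_bF_iff.2 fun χ hχ => ?_, fun χ hχ => ?_⟩
  · exact mem_of_dF_bP_mem (z.2.and_mem_iff.1 (hz ⟨_, hχ, rfl⟩)).1
  · exact mem_of_dP_bF_mem (z.2.and_mem_iff.1 (hz ⟨_, hχ, rfl⟩)).2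

theorem isTS4Frame_canonical : IsTS4Frame (canonicalRel box) (canonicalRel bF) where
  rrefl := canonicalRel_refl boxT
  rtrans _ _ _ := canonicalRel_trans box4
  qrefl := canonicalRel_refl bFT
  qtrans _ _ _ := canonicalRel_trans bF4
  rsubq _ _ := canonicalRel_bF_of_box
  pass _ _ := canonical_pass

theorem tsat_canonical_iff (φ : TForm) (x : Canonical) :
    tsat (canonicalRel box) (canonicalRel bF) canonicalVal φ x ↔ φ ∈ x.1 := by
  induction φ generalizing x with
  | var n => rfl
  | bot => simpa [tsat] using x.2.bot_notMem
  | and φ ψ ihφ ihψ => simp only [tsat, ihφ, ihψ, x.2.and_mem_iff]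
  | or φ ψ ihφ ihψ => simp only [tsat, ihφ, ihψ, x.2.or_mem_iff]
  | imp φ ψ ihφ ihψ => simp only [tsat, ihφ, ihψ, x.2.imp_mem_iff]
  | box φ ih => simp only [tsat, ih]; exact (isNormal_box.mem_iff x).symm
  | bF φ ih => simp only [tsat, ih]; exact (isNormal_bF.mem_iff x).symm
  | bP φ ih => simp only [tsat, ih, canonicalRel_bF_iff]; exact (isNormal_bP.mem_iff x).symm

end CanonicalFrame

theorem complete {φ : TForm}
    (h : ∀ (X : Type) (R Q : X → X → Prop), IsTS4Frame R Q → tValid R Q φ) : TS4 φ :=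
  of_forall_canonical fun x =>
    (tsat_canonical_iff φ x).1 (h _ _ _ isTS4Frame_canonical canonicalVal x)

theorem sound {X : Type} {R Q : X → X → Prop} (hF : IsTS4Frame R Q) {φ : TForm} (h : TS4 φ) :
    tValid R Q φ := by
  induction h with
  | mp _ _ _ _ ih₁ ih₂ => exact fun v x => ih₁ v x (ih₂ v x)
  | necBox _ _ ih | necF _ _ ih | necP _ _ ih => exact fun v _ y _ => ih v y
  | boxT _ => exact fun _ x h => h x (hF.rrefl x)
  | bFT _ | bPT _ => exact fun _ x h => h x (hF.qrefl x)
  | box4 _ => exact fun _ _ h _ hxy _ hyz => h _ (hF.rtrans _ _ _ hxy hyz)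
  | bF4 _ => exact fun _ _ h _ hxy _ hyz => h _ (hF.qtrans _ _ _ hxy hyz)
  | bP4 _ => exact fun _ _ h _ hyx _ hzy => h _ (hF.qtrans _ _ _ hzy hyx)
  | tense1 _ | tense2 _ => exact fun _ x h _ hxy hc => hc x hxy h
  | conn1 _ => exact fun _ x h hc => h fun y hxy => hc y (hF.rsubq x y hxy)
  | conn2 _ =>
    intro _ x h hc
    refine h fun y hxy hy => ?_
    obtain ⟨z, hxz, hzy, hyz⟩ := hF.pass x y hxy
    exact hc z hxz ⟨fun hz => hz y hzy hy, fun hz => hz y hyz hy⟩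
  | _ => intro v x; simp only [tsat, TForm.neg]; tauto

end TS4

/-- `TS4` is sound and complete with respect to TS4-frames. -/
theorem TS4_soundness_completeness (φ : TForm) :
    TS4 φ ↔ ∀ (X : Type) (R Q : X → X → Prop), IsTS4Frame R Q → tValid R Q φ :=
  ⟨fun h _ _ _ hF => TS4.sound hF h, TS4.complete⟩
end

section
/- MS4.t is sound and complete with respect to MS4.t-frames: MS4.t ⊢ φ if and only if φ is valid in every MS4.t-frame. -/
/-- `(X,R,E)` is an MS4.t-frame: `R` is a quasi-order, `E` an equivalence
relation, and `xEy`, `yRz` imply there is `u` with `xRu` and `uEz`. -/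
structure IsMS4tFrame {X : Type} (R E : X → X → Prop) : Prop where
  rrefl : ∀ x, R x x
  rtrans : ∀ x y z, R x y → R y z → R x z
  eqv : Equivalence E
  comm : ∀ x y z, E x y → R y z → ∃ u, R x u ∧ E u z

/-- Satisfaction in an MS4.t-frame: `□_F` is interpreted via `R`-successors,
`□_P` via `R`-predecessors, and `∀` via `E`-related points. -/
def atsat {X : Type} (R E : X → X → Prop) (v : Nat → Set X) : AForm → X → Prop
  | .var n, x => x ∈ v n
  | .bot, _ => False
  | .and φ ψ, x => atsat R E v φ x ∧ atsat R E v ψ x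
  | .or φ ψ, x => atsat R E v φ x ∨ atsat R E v ψ x
  | .imp φ ψ, x => atsat R E v φ x → atsat R E v ψ x
  | .boxF φ, x => ∀ y, R x y → atsat R E v φ y
  | .boxP φ, x => ∀ y, R y x → atsat R E v φ y
  | .fa φ, x => ∀ y, E x y → atsat R E v φ y

/-- Validity in an MS4.t-frame. -/
def atValid {X : Type} (R E : X → X → Prop) (φ : AForm) : Prop :=
  ∀ (v : Nat → Set X) (x : X), atsat R E v φ x

section Aux
open AForm

/-- Iterated implication `a₁ → (a₂ → ... → φ)`. -/
def impChain : List AForm → AForm → AForm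
  | [], φ => φ
  | a :: L, φ => a.imp (impChain L φ)

/-- Derivability from a set of assumptions. -/
inductive Deriv (Γ : Set AForm) : AForm → Prop
  | ax {φ} : φ ∈ Γ → Deriv Γ φ
  | thm {φ} : MS4t φ → Deriv Γ φ
  | mp {φ ψ} : Deriv Γ (φ.imp ψ) → Deriv Γ φ → Deriv Γ ψ

lemma MS4t_id (φ : AForm) : MS4t (φ.imp φ) :=
  MS4t.mp _ _ (MS4t.mp _ _ (MS4t.a2 φ (φ.imp φ) φ) (MS4t.a1 φ (φ.imp φ))) (MS4t.a1 φ φ)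

lemma Deriv.mono {Γ Γ' : Set AForm} {φ : AForm} (h : Deriv Γ φ) (hs : Γ ⊆ Γ') :
    Deriv Γ' φ := by
  induction h with
  | ax h => exact Deriv.ax (hs h)
  | thm h => exact Deriv.thm h
  | mp _ _ ih1 ih2 => exact Deriv.mp ih1 ih2

lemma deduction {Γ : Set AForm} {a φ : AForm} (h : Deriv (insert a Γ) φ) :
    Deriv Γ (a.imp φ) := by
  induction h with
  | @ax φ h =>
    rcases Set.mem_insert_iff.1 h with rfl | h
    · exact Deriv.thm (MS4t_id _)
    · exact Deriv.mp (Deriv.thm (MS4t.a1 _ _)) (Deriv.ax h)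
  | thm h => exact Deriv.mp (Deriv.thm (MS4t.a1 _ _)) (Deriv.thm h)
  | mp _ _ ih1 ih2 => exact Deriv.mp (Deriv.mp (Deriv.thm (MS4t.a2 _ _ _)) ih1) ih2

lemma Deriv.compact {Γ : Set AForm} {φ : AForm} (h : Deriv Γ φ) :
    ∃ L : List AForm, (∀ ψ ∈ L, ψ ∈ Γ) ∧ Deriv {x | x ∈ L} φ := by
  induction h with
  | @ax φ h => exact ⟨[φ], by simpa using h, Deriv.ax (by simp)⟩
  | thm h => exact ⟨[], by simp, Deriv.thm h⟩
  | @mp φ ψ _ _ ih1 ih2 =>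
    obtain ⟨L1, hL1, d1⟩ := ih1
    obtain ⟨L2, hL2, d2⟩ := ih2
    refine ⟨L1 ++ L2, ?_, Deriv.mp (d1.mono ?_) (d2.mono ?_)⟩
    · intro ψ hψ; rcases List.mem_append.1 hψ with h | h
      · exact hL1 _ h
      · exact hL2 _ h
    · intro x hx; simp only [Set.mem_setOf_eq, List.mem_append]; exact Or.inl hx
    · intro x hx; simp only [Set.mem_setOf_eq, List.mem_append]; exact Or.inr hx

lemma Deriv.peel {φ : AForm} : ∀ (L : List AForm) (Γ : Set AForm),
    Deriv (Γ ∪ {x | x ∈ L}) φ → Deriv Γ (impChain L φ) := by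
  intro L
  induction L with
  | nil => intro Γ h; exact h.mono (by intro x hx; rcases hx with hx | hx; exact hx; simp at hx)
  | cons a L ih =>
    intro Γ h
    have h' : Deriv (insert a Γ ∪ {x | x ∈ L}) φ := by
      refine h.mono ?_
      intro x hx
      rcases hx with hx | hx
      · exact Or.inl (Or.inr hx)
      · simp only [List.mem_cons, Set.mem_setOf_eq] at hx
        rcases hx with rfl | hx
        · exact Or.inl (Or.inl rfl)
        · exact Or.inr hx
    exact deduction (ih (insert a Γ) h')

lemma Deriv.ofChain {Γ : Set AForm} {φ : AForm} : ∀ {L : List AForm},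
    Deriv Γ (impChain L φ) → (∀ ψ ∈ L, ψ ∈ Γ) → Deriv Γ φ := by
  intro L
  induction L with
  | nil => intro h _; exact h
  | cons a L ih =>
    intro h hm
    exact ih (Deriv.mp h (Deriv.ax (hm a (by simp)))) (fun ψ hψ => hm ψ (by simp [hψ]))

lemma MS4t_of_deriv_empty {φ : AForm} (h : Deriv ∅ φ) : MS4t φ := by
  induction h with
  | ax h => exact absurd h (by simp)
  | thm h => exact h
  | mp _ _ ih1 ih2 => exact MS4t.mp _ _ ih1 ih2

lemma MS4t_chain {L : List AForm} {φ : AForm} (h : Deriv {x | x ∈ L} φ) :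
    MS4t (impChain L φ) := by
  refine MS4t_of_deriv_empty (Deriv.peel L ∅ (h.mono ?_))
  intro x hx; exact Or.inr hx

/-- Prove a propositional-style tautology by deriving it from listed hypotheses. -/
lemma MS4t_taut {L : List AForm} {φ : AForm} (h : Deriv {x | x ∈ L} φ) :
    MS4t (impChain L φ) := MS4t_chain h

lemma MS4t_compose2 {p q r s : AForm} (h1 : MS4t (p.imp q))
    (h2 : MS4t (r.imp (s.imp p))) : MS4t (r.imp (s.imp q)) := by
  have : Deriv {x | x ∈ [r, s]} q := by
    refine Deriv.mp (Deriv.thm h1) ?_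
    exact Deriv.mp (Deriv.mp (Deriv.thm h2) (Deriv.ax (by simp))) (Deriv.ax (by simp))
  exact MS4t_chain this

/-- `□`-distribution over implication chains, for a generic modality. -/
lemma MS4t_chain_box (m : AForm → AForm)
    (hK : ∀ a b : AForm, MS4t ((m (a.imp b)).imp ((m a).imp (m b))))
    (hnec : ∀ a : AForm, MS4t a → MS4t (m a)) :
    ∀ (L : List AForm) (φ : AForm),
      MS4t ((m (impChain L φ)).imp (impChain (L.map m) (m φ))) := by
  intro L
  induction L with
  | nil => intro φ; exact MS4t_id _
  | cons a L ih =>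
    intro φ
    exact MS4t_compose2 (ih φ) (hK a (impChain L φ))

lemma MS4t_mono_m (m : AForm → AForm)
    (hK : ∀ a b : AForm, MS4t ((m (a.imp b)).imp ((m a).imp (m b))))
    (hnec : ∀ a : AForm, MS4t a → MS4t (m a))
    {a b : AForm} (h : MS4t (a.imp b)) : MS4t ((m a).imp (m b)) :=
  MS4t.mp _ _ (hK a b) (hnec _ h)

lemma hK_F : ∀ a b : AForm, MS4t ((AForm.boxF (a.imp b)).imp ((AForm.boxF a).imp (AForm.boxF b))) :=
  fun a b => MS4t.bFK a b
lemma hK_P : ∀ a b : AForm, MS4t ((AForm.boxP (a.imp b)).imp ((AForm.boxP a).imp (AForm.boxP b))) :=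
  fun a b => MS4t.bPK a b
lemma hK_A : ∀ a b : AForm, MS4t ((AForm.fa (a.imp b)).imp ((AForm.fa a).imp (AForm.fa b))) :=
  fun a b => MS4t.faK a b

end Aux

section MCSsec
open AForm

def ConS (Γ : Set AForm) : Prop := ¬ Deriv Γ AForm.bot
def MCS (Γ : Set AForm) : Prop := ConS Γ ∧ ∀ φ : AForm, φ ∈ Γ ∨ φ.neg ∈ Γ

lemma MCS.mem_of_deriv {Γ : Set AForm} (hΓ : MCS Γ) {φ : AForm} (h : Deriv Γ φ) :
    φ ∈ Γ := by
  rcases hΓ.2 φ with hm | hm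
  · exact hm
  · exact absurd (Deriv.mp (Deriv.ax hm) h) hΓ.1

lemma MCS.thm_mem {Γ : Set AForm} (hΓ : MCS Γ) {φ : AForm} (h : MS4t φ) : φ ∈ Γ :=
  hΓ.mem_of_deriv (Deriv.thm h)

lemma MCS.mp_mem {Γ : Set AForm} (hΓ : MCS Γ) {φ ψ : AForm}
    (h1 : φ.imp ψ ∈ Γ) (h2 : φ ∈ Γ) : ψ ∈ Γ :=
  hΓ.mem_of_deriv (Deriv.mp (Deriv.ax h1) (Deriv.ax h2))

lemma MCS.not_both {Γ : Set AForm} (hΓ : MCS Γ) {φ : AForm}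
    (h1 : φ ∈ Γ) (h2 : φ.neg ∈ Γ) : False :=
  hΓ.1 (Deriv.mp (Deriv.ax h2) (Deriv.ax h1))

lemma MCS.neg_mem_iff {Γ : Set AForm} (hΓ : MCS Γ) {φ : AForm} :
    φ.neg ∈ Γ ↔ φ ∉ Γ := by
  constructor
  · intro h hφ; exact hΓ.not_both hφ h
  · intro h; rcases hΓ.2 φ with hm | hm
    · exact absurd hm h
    · exact hm

lemma MCS.bot_not_mem {Γ : Set AForm} (hΓ : MCS Γ) : AForm.bot ∉ Γ :=
  fun h => hΓ.1 (Deriv.ax h)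

lemma MS4t_negE (φ ψ : AForm) : MS4t (φ.neg.imp (φ.imp ψ)) := by
  have h1 : Deriv {x | x ∈ [φ.neg, φ]} (φ.imp AForm.bot) := Deriv.ax (by simp [AForm.neg])
  have h2 : Deriv {x | x ∈ [φ.neg, φ]} φ := Deriv.ax (by simp)
  have h3 : Deriv {x | x ∈ [φ.neg, φ]} ψ := Deriv.mp (Deriv.thm (MS4t.a9 ψ)) (Deriv.mp h1 h2)
  exact MS4t_chain h3

lemma MS4t_dni (φ : AForm) : MS4t (φ.imp φ.neg.neg) := by
  have h1 : Deriv {x | x ∈ [φ, φ.neg]} (φ.imp AForm.bot) := Deriv.ax (by simp [AForm.neg])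
  have h2 : Deriv {x | x ∈ [φ, φ.neg]} φ := Deriv.ax (by simp)
  exact MS4t_chain (Deriv.mp h1 h2)

lemma MCS.imp_mem_iff {Γ : Set AForm} (hΓ : MCS Γ) {φ ψ : AForm} :
    φ.imp ψ ∈ Γ ↔ (φ ∈ Γ → ψ ∈ Γ) := by
  constructor
  · intro h hφ; exact hΓ.mp_mem h hφ
  · intro h
    rcases hΓ.2 φ with hm | hm
    · exact hΓ.mp_mem (hΓ.thm_mem (MS4t.a1 ψ φ)) (h hm)
    · exact hΓ.mp_mem (hΓ.thm_mem (MS4t_negE φ ψ)) hm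

lemma MCS.and_mem_iff {Γ : Set AForm} (hΓ : MCS Γ) {φ ψ : AForm} :
    φ.and ψ ∈ Γ ↔ (φ ∈ Γ ∧ ψ ∈ Γ) := by
  constructor
  · intro h
    exact ⟨hΓ.mp_mem (hΓ.thm_mem (MS4t.a3 φ ψ)) h, hΓ.mp_mem (hΓ.thm_mem (MS4t.a4 φ ψ)) h⟩
  · rintro ⟨h1, h2⟩
    exact hΓ.mp_mem (hΓ.mp_mem (hΓ.thm_mem (MS4t.a5 φ ψ)) h1) h2

lemma MCS.or_mem_iff {Γ : Set AForm} (hΓ : MCS Γ) {φ ψ : AForm} :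
    φ.or ψ ∈ Γ ↔ (φ ∈ Γ ∨ ψ ∈ Γ) := by
  constructor
  · intro h
    by_contra hc
    push_neg at hc
    have h1 : φ.neg ∈ Γ := hΓ.neg_mem_iff.2 hc.1
    have h2 : ψ.neg ∈ Γ := hΓ.neg_mem_iff.2 hc.2
    have : (φ.or ψ).neg ∈ Γ := hΓ.mp_mem (hΓ.mp_mem (hΓ.thm_mem (MS4t.a8 φ ψ AForm.bot)) h1) h2
    exact hΓ.not_both h this
  · intro h
    rcases h with h | h
    · exact hΓ.mp_mem (hΓ.thm_mem (MS4t.a6 φ ψ)) h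
    · exact hΓ.mp_mem (hΓ.thm_mem (MS4t.a7 φ ψ)) h

lemma chain_find {c : Set (Set AForm)} (hc : IsChain (· ⊆ ·) c) (hne : c.Nonempty) :
    ∀ L : List AForm, (∀ ψ ∈ L, ψ ∈ ⋃₀ c) → ∃ t ∈ c, ∀ ψ ∈ L, ψ ∈ t := by
  intro L
  induction L with
  | nil => intro _; exact ⟨hne.choose, hne.choose_spec, by simp⟩
  | cons a L ih =>
    intro h
    obtain ⟨t, htc, ht⟩ := ih (fun ψ hψ => h ψ (by simp [hψ]))
    obtain ⟨s, hsc, hs⟩ := h a (by simp)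
    rcases eq_or_ne t s with rfl | hts
    · refine ⟨t, htc, fun ψ hψ => ?_⟩
      rcases List.mem_cons.1 hψ with rfl | hψ
      · exact hs
      · exact ht ψ hψ
    · rcases hc htc hsc hts with hsub | hsub
      · refine ⟨s, hsc, fun ψ hψ => ?_⟩
        rcases List.mem_cons.1 hψ with rfl | hψ
        · exact hs
        · exact hsub (ht ψ hψ)
      · refine ⟨t, htc, fun ψ hψ => ?_⟩
        rcases List.mem_cons.1 hψ with rfl | hψ
        · exact hsub hs
        · exact ht ψ hψ

lemma lindenbaum {Γ : Set AForm} (hΓ : ConS Γ) : ∃ Δ, Γ ⊆ Δ ∧ MCS Δ := by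
  obtain ⟨Δ, hsub, hmax⟩ := zorn_subset_nonempty {Δ : Set AForm | ConS Δ}
    (fun c hcS hchain hne => by
      refine ⟨⋃₀ c, ?_, fun s hs => Set.subset_sUnion_of_mem hs⟩
      intro hd
      obtain ⟨L, hL, hLd⟩ := hd.compact
      obtain ⟨t, htc, ht⟩ := chain_find hchain hne L hL
      exact hcS htc (hLd.mono (fun x hx => ht x hx))) Γ hΓ
  refine ⟨Δ, hsub, hmax.1, fun φ => ?_⟩
  by_contra hc
  push_neg at hc
  have h1 : ¬ ConS (insert φ Δ) := by
    intro hcon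
    exact hc.1 (hmax.2 hcon (Set.subset_insert _ _) (Set.mem_insert _ _))
  have h2 : Deriv Δ φ.neg := deduction (not_not.1 h1)
  have h3 : ¬ ConS (insert φ.neg Δ) := by
    intro hcon
    exact hc.2 (hmax.2 hcon (Set.subset_insert _ _) (Set.mem_insert _ _))
  have h4 : Deriv Δ φ.neg.neg := deduction (not_not.1 h3)
  exact hmax.1 (Deriv.mp h4 h2)

end MCSsec

section Canonical
open AForm

/-- Generic existence lemma for a modality `m`. -/
lemma exists_mcs_m (m : AForm → AForm)
    (hK : ∀ a b : AForm, MS4t ((m (a.imp b)).imp ((m a).imp (m b))))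
    (hnec : ∀ a : AForm, MS4t a → MS4t (m a))
    {Γ : Set AForm} (hΓ : MCS Γ) {φ : AForm} (hφ : m φ ∉ Γ) :
    ∃ Δ, MCS Δ ∧ (∀ ψ, m ψ ∈ Γ → ψ ∈ Δ) ∧ φ ∉ Δ := by
  set A : Set AForm := {ψ | m ψ ∈ Γ} with hA
  have hcon : ConS (insert φ.neg A) := by
    intro hd
    have h1 : Deriv A (φ.neg.imp AForm.bot) := deduction hd
    have h2 : Deriv A φ := Deriv.mp (Deriv.thm (MS4t.dne φ)) h1
    obtain ⟨L, hL, hLd⟩ := h2.compact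
    have h3 : MS4t (impChain L φ) := MS4t_chain hLd
    have h4 : MS4t (impChain (L.map m) (m φ)) :=
      MS4t.mp _ _ (MS4t_chain_box m hK hnec L φ) (hnec _ h3)
    have h5 : Deriv Γ (m φ) := by
      refine Deriv.ofChain (Deriv.thm h4) ?_
      intro χ hχ
      obtain ⟨ψ, hψL, rfl⟩ := List.mem_map.1 hχ
      exact hL ψ hψL
    exact hφ (hΓ.mem_of_deriv h5)
  obtain ⟨Δ, hsub, hΔ⟩ := lindenbaum hcon
  refine ⟨Δ, hΔ, fun ψ hψ => hsub (Set.mem_insert_of_mem _ hψ), fun hmem => ?_⟩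
  exact hΔ.not_both hmem (hsub (Set.mem_insert _ _))

/-- Combined existence lemma used for the commutativity condition:
consistency of `{ψ | □_F ψ ∈ Γ} ∪ {χ | ∀χ ∈ Δ}`. -/
lemma split_list {A B : Set AForm} : ∀ L : List AForm, (∀ ψ ∈ L, ψ ∈ A ∪ B) →
    ∃ La Lb : List AForm, (∀ ψ ∈ La, ψ ∈ A) ∧ (∀ ψ ∈ Lb, ψ ∈ B) ∧
      ∀ ψ ∈ L, ψ ∈ La ∨ ψ ∈ Lb := by
  intro L
  induction L with
  | nil => exact fun _ => ⟨[], [], by simp, by simp, by simp⟩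
  | cons a L ih =>
    intro h
    obtain ⟨La, Lb, h1, h2, h3⟩ := ih (fun ψ hψ => h ψ (by simp [hψ]))
    rcases h a (by simp) with ha | ha
    · refine ⟨a :: La, Lb, ?_, h2, ?_⟩
      · intro ψ hψ; rcases List.mem_cons.1 hψ with rfl | hψ
        · exact ha
        · exact h1 ψ hψ
      · intro ψ hψ; rcases List.mem_cons.1 hψ with rfl | hψ
        · exact Or.inl (by simp)
        · rcases h3 ψ hψ with h | h
          · exact Or.inl (by simp [h])
          · exact Or.inr h
    · refine ⟨La, a :: Lb, h1, ?_, ?_⟩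
      · intro ψ hψ; rcases List.mem_cons.1 hψ with rfl | hψ
        · exact ha
        · exact h2 ψ hψ
      · intro ψ hψ; rcases List.mem_cons.1 hψ with rfl | hψ
        · exact Or.inr (by simp)
        · rcases h3 ψ hψ with h | h
          · exact Or.inl h
          · exact Or.inr (by simp [h])

/-- Canonical worlds. -/
def CWorld : Type := {Γ : Set AForm // MCS Γ}

def canR (Γ Δ : CWorld) : Prop := ∀ φ : AForm, φ.boxF ∈ Γ.1 → φ ∈ Δ.1
def canE (Γ Δ : CWorld) : Prop := ∀ φ : AForm, φ.fa ∈ Γ.1 → φ ∈ Δ.1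

lemma canE_symm {Γ Δ : CWorld} (h : canE Γ Δ) : canE Δ Γ := by
  intro φ hφ
  by_contra hc
  have h1 : φ.neg ∈ Γ.1 := Γ.2.neg_mem_iff.2 hc
  have h2 : ((φ.neg).exq).fa ∈ Γ.1 := Γ.2.mp_mem (Γ.2.thm_mem (MS4t.faB φ.neg)) h1
  have h3 : (φ.neg).exq ∈ Δ.1 := h _ h2
  have h4 : (φ.neg.neg).fa ∈ Δ.1 :=
    Δ.2.mp_mem (Δ.2.thm_mem (MS4t_mono_m AForm.fa hK_A MS4t.necFa (MS4t_dni φ))) hφ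
  exact Δ.2.not_both h4 h3

lemma canE_trans {Γ Δ Θ : CWorld} (h1 : canE Γ Δ) (h2 : canE Δ Θ) : canE Γ Θ := by
  intro φ hφ
  exact h2 φ (h1 _ (Γ.2.mp_mem (Γ.2.thm_mem (MS4t.fa4 φ)) hφ))

lemma canE_refl (Γ : CWorld) : canE Γ Γ :=
  fun φ hφ => Γ.2.mp_mem (Γ.2.thm_mem (MS4t.faT φ)) hφ

lemma canR_refl (Γ : CWorld) : canR Γ Γ :=
  fun φ hφ => Γ.2.mp_mem (Γ.2.thm_mem (MS4t.bFT φ)) hφ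

lemma canR_trans {Γ Δ Θ : CWorld} (h1 : canR Γ Δ) (h2 : canR Δ Θ) : canR Γ Θ := by
  intro φ hφ
  exact h2 φ (h1 _ (Γ.2.mp_mem (Γ.2.thm_mem (MS4t.bF4 φ)) hφ))

/-- Tense correspondence: `R Γ Δ` implies all `□_P`-formulas of `Δ` hold at `Γ`. -/
lemma canR_past {Γ Δ : CWorld} (h : canR Γ Δ) {φ : AForm} (hφ : φ.boxP ∈ Δ.1) :
    φ ∈ Γ.1 := by
  by_contra hc
  have h1 : φ.neg ∈ Γ.1 := Γ.2.neg_mem_iff.2 hc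
  have h2 : ((φ.neg).diaP).boxF ∈ Γ.1 := Γ.2.mp_mem (Γ.2.thm_mem (MS4t.tense2 φ.neg)) h1
  have h3 : (φ.neg).diaP ∈ Δ.1 := h _ h2
  have h4 : (φ.neg.neg).boxP ∈ Δ.1 :=
    Δ.2.mp_mem (Δ.2.thm_mem (MS4t_mono_m AForm.boxP hK_P MS4t.necP (MS4t_dni φ))) hφ
  exact Δ.2.not_both h4 h3

/-- Converse tense correspondence. -/
lemma canR_of_past {Γ Δ : CWorld} (h : ∀ φ : AForm, φ.boxP ∈ Δ.1 → φ ∈ Γ.1) :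
    canR Γ Δ := by
  intro φ hφ
  by_contra hc
  have h1 : φ.neg ∈ Δ.1 := Δ.2.neg_mem_iff.2 hc
  have h2 : ((φ.neg).diaF).boxP ∈ Δ.1 := Δ.2.mp_mem (Δ.2.thm_mem (MS4t.tense1 φ.neg)) h1
  have h3 : (φ.neg).diaF ∈ Γ.1 := h _ h2
  have h4 : (φ.neg.neg).boxF ∈ Γ.1 :=
    Γ.2.mp_mem (Γ.2.thm_mem (MS4t_mono_m AForm.boxF hK_F MS4t.necF (MS4t_dni φ))) hφ
  exact Γ.2.not_both h4 h3

end Canonical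

section Canonical2
open AForm

lemma canComm : ∀ Γ Γ' Δ : CWorld, canE Γ Γ' → canR Γ' Δ →
    ∃ u : CWorld, canR Γ u ∧ canE u Δ := by
  intro Γ Γ' Δ hE hR
  set A : Set AForm := {ψ | ψ.boxF ∈ Γ.1} with hA
  set B : Set AForm := {χ | χ.fa ∈ Δ.1} with hB
  have hcon : ConS (A ∪ B) := by
    intro hd
    obtain ⟨L, hL, hLd⟩ := hd.compact
    obtain ⟨La, Lb, h1, h2, h3⟩ := split_list L hL
    have hab : Deriv ({x | x ∈ La} ∪ {x | x ∈ Lb}) AForm.bot := by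
      refine hLd.mono ?_
      intro x hx
      rcases h3 x hx with h | h
      · exact Or.inl h
      · exact Or.inr h
    set θ : AForm := impChain Lb AForm.bot with hθ
    have hθΓ : θ.boxF ∈ Γ.1 := by
      have c1 : MS4t (impChain La θ) := MS4t_chain (Deriv.peel Lb _ hab)
      have c2 : MS4t (impChain (La.map AForm.boxF) (θ.boxF)) :=
        MS4t.mp _ _ (MS4t_chain_box AForm.boxF hK_F MS4t.necF La θ) (MS4t.necF _ c1)
      refine Γ.2.mem_of_deriv (Deriv.ofChain (Deriv.thm c2) ?_)
      intro χ hχ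
      obtain ⟨ψ, hψ, rfl⟩ := List.mem_map.1 hχ
      exact h1 ψ hψ
    -- push through faB, comm, E and R to get `exq θ ∈ Δ`
    have s1 : ((θ.exq).fa).boxF ∈ Γ.1 :=
      Γ.2.mp_mem (Γ.2.thm_mem
        (MS4t_mono_m AForm.boxF hK_F MS4t.necF (MS4t.faB θ))) hθΓ
    have s2 : ((θ.exq).boxF).fa ∈ Γ.1 :=
      Γ.2.mp_mem (Γ.2.thm_mem (MS4t.comm θ.exq)) s1
    have s3 : (θ.exq).boxF ∈ Γ'.1 := hE _ s2
    have s4 : θ.exq ∈ Δ.1 := hR _ s3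
    -- from the fa-formulas of Δ derive `(θ.neg).fa ∈ Δ`
    have t1 : Deriv (insert θ {x | x ∈ Lb}) AForm.bot := by
      refine Deriv.ofChain (φ := AForm.bot) (L := Lb)
        (Deriv.ax (Set.mem_insert _ _)) ?_
      intro ψ hψ
      exact Set.mem_insert_of_mem _ hψ
    have t2 : MS4t (impChain Lb θ.neg) := MS4t_chain (deduction t1)
    have t3 : MS4t (impChain (Lb.map AForm.fa) ((θ.neg).fa)) :=
      MS4t.mp _ _ (MS4t_chain_box AForm.fa hK_A MS4t.necFa Lb θ.neg) (MS4t.necFa _ t2)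
    have t4 : (θ.neg).fa ∈ Δ.1 := by
      refine Δ.2.mem_of_deriv (Deriv.ofChain (Deriv.thm t3) ?_)
      intro χ hχ
      obtain ⟨ψ, hψ, rfl⟩ := List.mem_map.1 hχ
      exact h2 ψ hψ
    exact Δ.2.not_both t4 s4
  obtain ⟨u, hsub, hu⟩ := lindenbaum hcon
  refine ⟨⟨u, hu⟩, ?_, ?_⟩
  · intro ψ hψ
    exact hsub (Or.inl hψ)
  · refine canE_symm (Γ := Δ) ?_
    intro ψ hψ
    exact hsub (Or.inr hψ)

def canV : Nat → Set CWorld := fun n => {Γ : CWorld | AForm.var n ∈ Γ.1}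

lemma truth_lemma : ∀ (φ : AForm) (Γ : CWorld),
    atsat canR canE canV φ Γ ↔ φ ∈ Γ.1 := by
  intro φ
  induction φ with
  | var n => intro Γ; exact Iff.rfl
  | bot => intro Γ; simpa [atsat] using fun h => Γ.2.bot_not_mem h
  | and φ ψ ihφ ihψ =>
    intro Γ
    simp only [atsat, ihφ, ihψ, Γ.2.and_mem_iff]
  | or φ ψ ihφ ihψ =>
    intro Γ
    simp only [atsat, ihφ, ihψ, Γ.2.or_mem_iff]
  | imp φ ψ ihφ ihψ =>
    intro Γ
    simp only [atsat, ihφ, ihψ, Γ.2.imp_mem_iff]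
  | boxF φ ih =>
    intro Γ
    constructor
    · intro h
      by_contra hc
      obtain ⟨Δ, hΔ, hall, hnφ⟩ := exists_mcs_m AForm.boxF hK_F MS4t.necF Γ.2 hc
      exact hnφ ((ih ⟨Δ, hΔ⟩).1 (h ⟨Δ, hΔ⟩ (fun ψ hψ => hall ψ hψ)))
    · intro h Δ hΔ
      exact (ih Δ).2 (hΔ φ h)
  | boxP φ ih =>
    intro Γ
    constructor
    · intro h
      by_contra hc
      obtain ⟨Δ, hΔ, hall, hnφ⟩ := exists_mcs_m AForm.boxP hK_P MS4t.necP Γ.2 hc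
      have hR : canR ⟨Δ, hΔ⟩ Γ := canR_of_past (fun ψ hψ => hall ψ hψ)
      exact hnφ ((ih ⟨Δ, hΔ⟩).1 (h ⟨Δ, hΔ⟩ hR))
    · intro h Δ hΔ
      exact (ih Δ).2 (canR_past hΔ h)
  | fa φ ih =>
    intro Γ
    constructor
    · intro h
      by_contra hc
      obtain ⟨Δ, hΔ, hall, hnφ⟩ := exists_mcs_m AForm.fa hK_A MS4t.necFa Γ.2 hc
      exact hnφ ((ih ⟨Δ, hΔ⟩).1 (h ⟨Δ, hΔ⟩ (fun ψ hψ => hall ψ hψ)))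
    · intro h Δ hΔ
      exact (ih Δ).2 (hΔ φ h)

lemma MS4t_sound {φ : AForm} (h : MS4t φ) :
    ∀ (X : Type) (R E : X → X → Prop), IsMS4tFrame R E → atValid R E φ := by
  induction h with
  | a1 φ ψ => intro X R E hF v x; exact fun h _ => h
  | a2 φ ψ χ => intro X R E hF v x; exact fun h1 h2 h3 => h1 h3 (h2 h3)
  | a3 φ ψ => intro X R E hF v x; exact fun h => h.1
  | a4 φ ψ => intro X R E hF v x; exact fun h => h.2
  | a5 φ ψ => intro X R E hF v x; exact fun h1 h2 => ⟨h1, h2⟩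
  | a6 φ ψ => intro X R E hF v x; exact fun h => Or.inl h
  | a7 φ ψ => intro X R E hF v x; exact fun h => Or.inr h
  | a8 φ ψ χ => intro X R E hF v x; exact fun h1 h2 h3 => h3.elim h1 h2
  | a9 φ => intro X R E hF v x; exact fun h => h.elim
  | dne φ =>
    intro X R E hF v x
    intro h
    by_contra hc
    exact h hc
  | bFK φ ψ => intro X R E hF v x; exact fun h1 h2 y hy => h1 y hy (h2 y hy)
  | bFT φ => intro X R E hF v x; exact fun h => h x (hF.rrefl x)
  | bF4 φ => intro X R E hF v x; exact fun h y hxy z hyz => h z (hF.rtrans _ _ _ hxy hyz)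
  | bPK φ ψ => intro X R E hF v x; exact fun h1 h2 y hy => h1 y hy (h2 y hy)
  | bPT φ => intro X R E hF v x; exact fun h => h x (hF.rrefl x)
  | bP4 φ => intro X R E hF v x; exact fun h y hyx z hzy => h z (hF.rtrans _ _ _ hzy hyx)
  | tense1 φ => intro X R E hF v x; exact fun h y hyx hc => hc x hyx h
  | tense2 φ => intro X R E hF v x; exact fun h y hxy hc => hc x hxy h
  | faK φ ψ => intro X R E hF v x; exact fun h1 h2 y hy => h1 y hy (h2 y hy)
  | faT φ => intro X R E hF v x; exact fun h => h x (hF.eqv.refl x)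
  | fa4 φ => intro X R E hF v x; exact fun h y hxy z hyz => h z (hF.eqv.trans hxy hyz)
  | faB φ => intro X R E hF v x; exact fun h y hxy hc => hc x (hF.eqv.symm hxy) h
  | comm φ =>
    intro X R E hF v x
    intro h y hExy z hRyz
    obtain ⟨u, hRxu, hEuz⟩ := hF.comm x y z hExy hRyz
    exact h u hRxu z hEuz
  | mp φ ψ h1 h2 ih1 ih2 =>
    intro X R E hF v x
    exact ih1 X R E hF v x (ih2 X R E hF v x)
  | necF φ h ih => intro X R E hF v x; exact fun y _ => ih X R E hF v y
  | necP φ h ih => intro X R E hF v x; exact fun y _ => ih X R E hF v y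
  | necFa φ h ih => intro X R E hF v x; exact fun y _ => ih X R E hF v y

end Canonical2

/-- `MS4.t` is sound and complete with respect to
MS4.t-frames. -/
theorem MS4t_soundness_completeness (φ : AForm) :
    MS4t φ ↔ ∀ (X : Type) (R E : X → X → Prop), IsMS4tFrame R E → atValid R E φ := by
  constructor
  · exact MS4t_sound
  · intro hval
    by_contra hnp
    have hcon : ConS {AForm.neg φ} := by
      intro hd
      have h1 : Deriv (insert (AForm.neg φ) ∅) AForm.bot := by
        refine hd.mono ?_
        intro x hx
        simp only [Set.mem_singleton_iff] at hx
        exact hx ▸ Set.mem_insert _ _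
      have h2 : MS4t ((AForm.neg φ).imp AForm.bot) := MS4t_of_deriv_empty (deduction h1)
      exact hnp (MS4t.mp _ _ (MS4t.dne φ) h2)
    obtain ⟨Δ, hsub, hΔ⟩ := lindenbaum hcon
    have frame : IsMS4tFrame canR canE :=
      ⟨canR_refl, fun x y z => canR_trans, ⟨canE_refl, canE_symm, canE_trans⟩,
        canComm⟩
    have hsat := hval CWorld canR canE frame canV ⟨Δ, hΔ⟩
    have hmem : φ ∈ Δ := (truth_lemma φ ⟨Δ, hΔ⟩).1 hsat
    exact hΔ.not_both hmem (hsub rfl)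
end

section
/- Let B be a boolean algebra, (B,□) an S4-algebra, and (B,∀) an S5-algebra. Then the following conditions (each universally quantified over a ∈ B) are equivalent: (0) □∀a ≤ ∀□a; (1) □∀□a = □∀a; (2) ∀□∀a = □∀a; (3) ∃□∃a = □∃a; (4) □∃□a = ∃□a; (5) ∃□a ≤ □∃a, where ∃a = ¬∀¬a. -/
/-- `(B,□)` is an S4-algebra (interior algebra). -/
structure IsS4 {B : Type} [BooleanAlgebra B] (box : B → B) : Prop where
  map_inf : ∀ a b : B, box (a ⊓ b) = box a ⊓ box b
  map_top : box ⊤ = ⊤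
  le_self : ∀ a : B, box a ≤ a
  le_idem : ∀ a : B, box a ≤ box (box a)

/-- `(B,∀)` is an S5-algebra (monadic algebra): an S4-algebra satisfying
`a ≤ ∀∃a`, where `∃a = ¬∀¬a`. -/
structure IsS5 {B : Type} [BooleanAlgebra B] (fa : B → B) : Prop where
  s4 : IsS4 fa
  sym : ∀ a : B, a ≤ fa ((fa aᶜ)ᶜ)

/-- `(B,■_F,■_P)` is an S4.t-algebra: two S4-operators linked by the tense
inequalities `a ≤ ■_P◆_F a` and `a ≤ ■_F◆_P a`. -/
structure IsS4t {B : Type} [BooleanAlgebra B] (bF bP : B → B) : Prop where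
  s4F : IsS4 bF
  s4P : IsS4 bP
  pf : ∀ a : B, a ≤ bP ((bF aᶜ)ᶜ)
  fp : ∀ a : B, a ≤ bF ((bP aᶜ)ᶜ)

/-- `(B,□,∀)` is an MS4-algebra. -/
structure IsMS4 {B : Type} [BooleanAlgebra B] (box fa : B → B) : Prop where
  s4 : IsS4 box
  s5 : IsS5 fa
  comm : ∀ a : B, box (fa a) ≤ fa (box a)

/-- `(B,□_F,□_P,∀)` is an MS4.t-algebra. -/
structure IsMS4t {B : Type} [BooleanAlgebra B] (bF bP fa : B → B) : Prop where
  s4t : IsS4t bF bP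
  ms4 : IsMS4 bF fa

/-- In any boolean algebra `B` with an S4-operator `□` and an
S5-operator `∀` (writing `∃a = ¬∀¬a`), the following are equivalent:
(0) `□∀a ≤ ∀□a`; (1) `□∀□a = □∀a`; (2) `∀□∀a = □∀a`; (3) `∃□∃a = □∃a`;
(4) `□∃□a = ∃□a`; (5) `∃□a ≤ □∃a`. -/
theorem ms4_axiom_tfae {B : Type} [BooleanAlgebra B] (box fa : B → B)
    (h4 : IsS4 box) (h5 : IsS5 fa) :
    List.TFAE
      [∀ a : B, box (fa a) ≤ fa (box a),
       ∀ a : B, box (fa (box a)) = box (fa a),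
       ∀ a : B, fa (box (fa a)) = box (fa a),
       ∀ a : B, (fa ((box ((fa aᶜ)ᶜ))ᶜ))ᶜ = box ((fa aᶜ)ᶜ),
       ∀ a : B, box ((fa ((box a)ᶜ))ᶜ) = (fa ((box a)ᶜ))ᶜ,
       ∀ a : B, (fa ((box a)ᶜ))ᶜ ≤ box ((fa aᶜ)ᶜ)] := by
  have bmono : ∀ {a b : B}, a ≤ b → box a ≤ box b := by
    intro a b hab
    have h := h4.map_inf a b
    rw [inf_eq_left.mpr hab] at h
    rw [h]; exact inf_le_right
  have fmono : ∀ {a b : B}, a ≤ b → fa a ≤ fa b := by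
    intro a b hab
    have h := h5.s4.map_inf a b
    rw [inf_eq_left.mpr hab] at h
    rw [h]; exact inf_le_right
  have emono : ∀ {a b : B}, a ≤ b → (fa aᶜ)ᶜ ≤ (fa bᶜ)ᶜ :=
    fun hab => compl_le_compl (fmono (compl_le_compl hab))
  have fafa : ∀ a : B, fa (fa a) = fa a :=
    fun a => le_antisymm (h5.s4.le_self _) (h5.s4.le_idem a)
  have boxbox : ∀ a : B, box (box a) = box a :=
    fun a => le_antisymm (h4.le_self _) (h4.le_idem a)
  have le_ex : ∀ a : B, a ≤ (fa aᶜ)ᶜ :=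
    fun a => le_trans (h5.sym a) (h5.s4.le_self _)
  have exex : ∀ a : B, (fa (((fa aᶜ)ᶜ)ᶜ))ᶜ = (fa aᶜ)ᶜ := by
    intro a; rw [compl_compl, fafa]
  have faex : ∀ a : B, fa ((fa aᶜ)ᶜ) = (fa aᶜ)ᶜ := by
    intro a
    refine le_antisymm (h5.s4.le_self _) ?_
    have h := h5.sym ((fa aᶜ)ᶜ)
    rwa [exex] at h
  have exfa : ∀ a : B, (fa ((fa a)ᶜ))ᶜ = fa a := by
    intro a
    have h1 : (fa a)ᶜ ≤ fa ((fa a)ᶜ) := by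
      have h := h5.sym ((fa a)ᶜ)
      rwa [compl_compl, fafa] at h
    refine le_antisymm ?_ ?_
    · have := compl_le_compl h1
      rwa [compl_compl] at this
    · rw [le_compl_iff_disjoint_right, disjoint_iff_inf_le]
      calc fa a ⊓ fa ((fa a)ᶜ) ≤ fa a ⊓ (fa a)ᶜ :=
            inf_le_inf_left _ (h5.s4.le_self _)
        _ ≤ ⊥ := by simp
  have adj : ∀ a b : B, (fa aᶜ)ᶜ ≤ b ↔ a ≤ fa b := by
    intro a b
    constructor
    · intro h
      calc a ≤ fa ((fa aᶜ)ᶜ) := h5.sym a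
        _ ≤ fa b := fmono h
    · intro h
      calc (fa aᶜ)ᶜ ≤ (fa ((fa b)ᶜ))ᶜ := emono h
        _ = fa b := exfa b
        _ ≤ b := h5.s4.le_self b
  tfae_have 1 → 2 := by
    intro h a
    refine le_antisymm (bmono (fmono (h4.le_self a))) ?_
    exact le_trans (h4.le_idem _) (bmono (h a))
  tfae_have 2 → 1 := by
    intro h a
    rw [← h a]
    exact h4.le_self _
  tfae_have 1 → 3 := by
    intro h a
    refine le_antisymm (h5.s4.le_self _) ?_
    have h1 := h (fa a)
    rwa [fafa] at h1
  tfae_have 3 → 1 := by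
    intro h a
    rw [← h a]
    exact fmono (bmono (h5.s4.le_self a))
  tfae_have 1 → 6 := by
    intro h a
    refine (adj _ _).mpr ?_
    calc box a ≤ box ((fa aᶜ)ᶜ) := bmono (le_ex a)
      _ = box (fa ((fa aᶜ)ᶜ)) := by rw [faex]
      _ ≤ fa (box ((fa aᶜ)ᶜ)) := h _
  tfae_have 6 → 1 := by
    intro h a
    refine (adj _ _).mp ?_
    have h1 := h (fa a)
    rw [exfa] at h1
    exact le_trans h1 (bmono (h5.s4.le_self a))
  tfae_have 6 → 5 := by
    intro h a
    refine le_antisymm (h4.le_self _) ?_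
    have h1 := h (box a)
    rwa [boxbox] at h1
  tfae_have 5 → 6 := by
    intro h a
    rw [← h a]
    exact bmono (emono (h4.le_self a))
  tfae_have 6 → 4 := by
    intro h a
    refine le_antisymm ?_ (le_ex _)
    have h1 := h ((fa aᶜ)ᶜ)
    rwa [exex] at h1
  tfae_have 4 → 6 := by
    intro h a
    exact le_trans (emono (bmono (le_ex a))) (h a).le
  tfae_finish
end

section
/- For every MS4.t-frame F=(X,R,E): (1) F^†=(X,R,Q_E) is a TS4-frame, where xQ_Ey iff there is z with xRz and zEy; (2) every valuation v on F is a valuation on F^† such that for every point x and every ML-formula φ, F^†,x ⊨_v φ iff F,x ⊨_v φ^†; (3) consequently F^† ⊨ φ iff F ⊨ φ^† for every ML-formula φ; and (4) every TS4-frame equals F^† for some MS4.t-frame F. -/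
/-- The relation `Q_E`: `x Q_E y` iff there is `z` with `xRz` and `zEy`. -/
def QE {X : Type} (R E : X → X → Prop) : X → X → Prop :=
  fun x y => ∃ z, R x z ∧ E z y

/-- For every MS4.t-frame `(X,R,E)`: (1) `(X,R,Q_E)` is a
TS4-frame; (2) every valuation `v` on the frame is a valuation on `(X,R,Q_E)`
with `F^†,x ⊨_v φ` iff `F,x ⊨_v φ^†`; (3) consequently `F^† ⊨ φ` iff
`F ⊨ φ^†`; (4) every TS4-frame equals `F^†` for some MS4.t-frame `F`. -/
theorem ms4t_dagger_frame (X : Type) (R E : X → X → Prop) (h : IsMS4tFrame R E) :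
    IsTS4Frame R (QE R E) ∧
    (∀ (v : Nat → Set X) (x : X) (φ : TForm),
        tsat R (QE R E) v φ x ↔ atsat R E v (dagger φ) x) ∧
    (∀ φ : TForm, tValid R (QE R E) φ ↔ atValid R E (dagger φ)) ∧
    (∀ (Y : Type) (R₀ Q₀ : Y → Y → Prop), IsTS4Frame R₀ Q₀ →
      ∃ E₀ : Y → Y → Prop, IsMS4tFrame R₀ E₀ ∧ ∀ a b : Y, Q₀ a b ↔ QE R₀ E₀ a b) := by
  have hQtrans : ∀ x y z, QE R E x y → QE R E y z → QE R E x z := by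
    rintro x y z ⟨a, hxa, hay⟩ ⟨b, hyb, hbz⟩
    obtain ⟨u, hau, hub⟩ := h.comm a y b hay hyb
    exact ⟨u, h.rtrans x a u hxa hau, h.eqv.trans hub hbz⟩
  have hTS4 : IsTS4Frame R (QE R E) := by
    refine ⟨h.rrefl, h.rtrans, ?_, hQtrans, ?_, ?_⟩
    · exact fun x => ⟨x, h.rrefl x, h.eqv.refl x⟩
    · exact fun x y hxy => ⟨y, hxy, h.eqv.refl y⟩
    · rintro x y ⟨z, hxz, hzy⟩
      exact ⟨z, hxz, ⟨z, h.rrefl z, hzy⟩, ⟨y, h.rrefl y, h.eqv.symm hzy⟩⟩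
  have key : ∀ (v : Nat → Set X) (φ : TForm) (x : X),
      tsat R (QE R E) v φ x ↔ atsat R E v (dagger φ) x := by
    intro v φ
    induction φ with
    | var n => intro x; rfl
    | bot => intro x; rfl
    | and φ ψ ihφ ihψ => intro x; exact and_congr (ihφ x) (ihψ x)
    | or φ ψ ihφ ihψ => intro x; exact or_congr (ihφ x) (ihψ x)
    | imp φ ψ ihφ ihψ => intro x; exact imp_congr (ihφ x) (ihψ x)
    | box φ ih =>
      intro x
      exact forall_congr' fun y => imp_congr Iff.rfl (ih y)
    | bF φ ih =>
      intro x
      constructor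
      · intro hx y hxy z hyz
        exact (ih z).mp (hx z ⟨y, hxy, hyz⟩)
      · rintro hx y ⟨z, hxz, hzy⟩
        exact (ih y).mpr (hx z hxz y hzy)
    | bP φ ih =>
      intro x
      constructor
      · intro hx y hxy z hzy
        exact (ih z).mp (hx z ⟨y, hzy, h.eqv.symm hxy⟩)
      · rintro hx y ⟨u, hyu, hux⟩
        exact (ih y).mpr (hx u (h.eqv.symm hux) y hyu)
  refine ⟨hTS4, fun v x φ => key v φ x, ?_, ?_⟩
  · intro φ
    constructor
    · intro hv v x; exact (key v φ x).mp (hv v x)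
    · intro hv v x; exact (key v φ x).mpr (hv v x)
  · intro Y R₀ Q₀ hQ
    refine ⟨fun a b => Q₀ a b ∧ Q₀ b a, ⟨hQ.rrefl, hQ.rtrans, ?_, ?_⟩, ?_⟩
    · exact ⟨fun x => ⟨hQ.qrefl x, hQ.qrefl x⟩, fun h1 => ⟨h1.2, h1.1⟩,
        fun h1 h2 => ⟨hQ.qtrans _ _ _ h1.1 h2.1, hQ.qtrans _ _ _ h2.2 h1.2⟩⟩
    · rintro x y z ⟨hxy, hyx⟩ hyz
      obtain ⟨u, hxu, huz, hzu⟩ := hQ.pass x z (hQ.qtrans _ _ _ hxy (hQ.rsubq _ _ hyz))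
      exact ⟨u, hxu, huz, hzu⟩
    · intro a b
      constructor
      · intro hab
        obtain ⟨z, haz, hzb, hbz⟩ := hQ.pass a b hab
        exact ⟨z, haz, hzb, hbz⟩
      · rintro ⟨z, haz, hzb, _⟩
        exact hQ.qtrans _ _ _ (hQ.rsubq _ _ haz) hzb
end

section
/- Let (B,□,∀) be an MS4-algebra, let H={a∈B : □a=a} and B₀={a∈B : ∀a=a}, let X_B be the set of ultrafilters of B, and define xR_By iff x∩H⊆y and xE_By iff x∩B₀=y∩B₀. Then (X_B,R_B,E_B) is an MS4-frame: R_B is a quasi-order, E_B is an equivalence relation, and whenever xE_By and yR_Bz there exists an ultrafilter u with xR_Bu and uE_Bz. -/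
/-- `x` is an ultrafilter of the boolean algebra `B`: a proper filter
containing, for each `a`, exactly one of `a`, `¬a`. -/
structure IsUltrafilterBA {B : Type} [BooleanAlgebra B] (x : Set B) : Prop where
  top_mem : ⊤ ∈ x
  inf_mem : ∀ a ∈ x, ∀ b ∈ x, a ⊓ b ∈ x
  mem_of_le : ∀ a ∈ x, ∀ b : B, a ≤ b → b ∈ x
  compl_mem_iff : ∀ a : B, aᶜ ∈ x ↔ a ∉ x

/-- The canonical relation `x R_B y iff x ∩ H ⊆ y`, where `H` is the set of
`□`-fixpoints. -/
def ufR {B : Type} [BooleanAlgebra B] (box : B → B) (x y : Set B) : Prop :=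
  ∀ a : B, box a = a → a ∈ x → a ∈ y

/-- The canonical relation `x E_B y iff x ∩ B₀ = y ∩ B₀`, where `B₀` is the set
of `∀`-fixpoints. -/
def ufE {B : Type} [BooleanAlgebra B] (fa : B → B) (x y : Set B) : Prop :=
  ∀ a : B, fa a = a → (a ∈ x ↔ a ∈ y)


/-- A proper filter. -/
structure IsProperFilter {B : Type} [BooleanAlgebra B] (x : Set B) : Prop where
  top_mem : ⊤ ∈ x
  inf_mem : ∀ a ∈ x, ∀ b ∈ x, a ⊓ b ∈ x
  mem_of_le : ∀ a ∈ x, ∀ b : B, a ≤ b → b ∈ x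
  bot_not_mem : ⊥ ∉ x

theorem properFilter_extend {B : Type} [BooleanAlgebra B] (F : Set B)
    (hF : IsProperFilter F) : ∃ u : Set B, F ⊆ u ∧ IsUltrafilterBA u := by
  set S : Set (Set B) := {G | IsProperFilter G}
  have hch : ∀ c ⊆ S, IsChain (· ⊆ ·) c → c.Nonempty →
      ∃ ub ∈ S, ∀ s ∈ c, s ⊆ ub := by
    rintro c hcS hchain ⟨G, hG⟩
    refine ⟨⋃₀ c, ?_, fun s hs => Set.subset_sUnion_of_mem hs⟩
    constructor
    · exact ⟨G, hG, (hcS hG).top_mem⟩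
    · rintro a ⟨s, hs, has⟩ b ⟨t, ht, hbt⟩
      rcases hchain.total hs ht with hst | hts
      · exact ⟨t, ht, (hcS ht).inf_mem a (hst has) b hbt⟩
      · exact ⟨s, hs, (hcS hs).inf_mem a has b (hts hbt)⟩
    · rintro a ⟨s, hs, has⟩ b hab
      exact ⟨s, hs, (hcS hs).mem_of_le a has b hab⟩
    · rintro ⟨s, hs, hbs⟩
      exact (hcS hs).bot_not_mem hbs
  obtain ⟨m, hFm, hmS, hmax⟩ := zorn_subset_nonempty S hch F hF
  · -- m is maximal proper filter; show it's an ultrafilter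
    have key : ∀ a : B, a ∉ m → aᶜ ∈ m := by
      intro a ha
      by_contra hac
      set m' : Set B := {c | ∃ e ∈ m, e ⊓ a ≤ c} with hm'
      have hmm' : m ⊆ m' := fun c hc => ⟨c, hc, inf_le_left⟩
      have hm'S : IsProperFilter m' := by
        constructor
        · exact hmm' hmS.top_mem
        · rintro c ⟨e, he, hec⟩ d ⟨f, hf, hfd⟩
          refine ⟨e ⊓ f, hmS.inf_mem e he f hf, ?_⟩
          calc e ⊓ f ⊓ a ≤ (e ⊓ a) ⊓ (f ⊓ a) := by
                refine le_inf (inf_le_inf_right a inf_le_left)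
                  (inf_le_inf_right a inf_le_right)
            _ ≤ c ⊓ d := inf_le_inf hec hfd
        · rintro c ⟨e, he, hec⟩ d hcd
          exact ⟨e, he, hec.trans hcd⟩
        · rintro ⟨e, he, hea⟩
          have : e ≤ aᶜ := by
            rw [le_compl_iff_disjoint_right]
            exact disjoint_iff.2 (le_bot_iff.1 hea)
          exact hac (hmS.mem_of_le e he aᶜ this)
      have := hmax hm'S hmm'
      exact ha (this ⟨⊤, hmS.top_mem, inf_le_right⟩)
    refine ⟨m, hFm, ?_⟩
    refine ⟨hmS.top_mem, hmS.inf_mem, hmS.mem_of_le, fun a => ⟨fun hac ha => hmS.bot_not_mem (by simpa using hmS.inf_mem a ha aᶜ hac), fun ha => key a ha⟩⟩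

/-- The canonical frame of an MS4-algebra `(B,□,∀)` is an
MS4-frame: on the set of ultrafilters of `B`, the relation `R_B` is a
quasi-order, `E_B` is an equivalence relation, and whenever `x E_B y` and
`y R_B z` there is an ultrafilter `u` with `x R_B u` and `u E_B z`. -/
theorem canonical_frame_is_ms4_frame {B : Type} [BooleanAlgebra B]
    (box fa : B → B) (h : IsMS4 box fa) :
    Reflexive (fun x y : {x : Set B // IsUltrafilterBA x} => ufR box x.1 y.1) ∧
    Transitive (fun x y : {x : Set B // IsUltrafilterBA x} => ufR box x.1 y.1) ∧
    Equivalence (fun x y : {x : Set B // IsUltrafilterBA x} => ufE fa x.1 y.1) ∧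
    (∀ x y z : {x : Set B // IsUltrafilterBA x},
      ufE fa x.1 y.1 → ufR box y.1 z.1 →
        ∃ u : {x : Set B // IsUltrafilterBA x},
          ufR box x.1 u.1 ∧ ufE fa u.1 z.1) := by

  obtain ⟨hs4, hs5, hcomm⟩ := h
  have box_mono : ∀ a b : B, a ≤ b → box a ≤ box b := by
    intro a b hab
    have h1 : a ⊓ b = a := inf_eq_left.2 hab
    calc box a = box (a ⊓ b) := by rw [h1]
      _ = box a ⊓ box b := hs4.map_inf a b
      _ ≤ box b := inf_le_right
  have box_idem : ∀ a : B, box (box a) = box a := fun a =>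
    le_antisymm (hs4.le_self _) (hs4.le_idem a)
  have fa_idem : ∀ a : B, fa (fa a) = fa a := fun a =>
    le_antisymm (hs5.s4.le_self _) (hs5.s4.le_idem a)
  have fa_compl : ∀ a : B, fa a = a → fa aᶜ = aᶜ := by
    intro a ha
    refine le_antisymm (hs5.s4.le_self _) ?_
    have := hs5.sym aᶜ
    rwa [compl_compl, ha] at this
  refine ⟨fun x a _ ha => ha, fun x y z hxy hyz a haf hax => hyz a haf (hxy a haf hax),
    ⟨fun x a _ => Iff.rfl, fun hxy a haf => (hxy a haf).symm,
      fun hxy hyz a haf => (hxy a haf).trans (hyz a haf)⟩, ?_⟩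
  intro x y z hxy hyz
  set G : Set B :=
    {c | ∃ a : B, box a = a ∧ a ∈ x.1 ∧ ∃ b : B, fa b = b ∧ b ∈ z.1 ∧ a ⊓ b ≤ c} with hG
  have hGF : IsProperFilter G := by
    constructor
    · exact ⟨⊤, hs4.map_top, x.2.top_mem, ⊤, hs5.s4.map_top, z.2.top_mem, le_top⟩
    · rintro c ⟨a, haf, hax, b, hbf, hbz, habc⟩ d ⟨a', haf', hax', b', hbf', hbz', habd⟩
      refine ⟨a ⊓ a', by rw [hs4.map_inf, haf, haf'], x.2.inf_mem a hax a' hax',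
        b ⊓ b', by rw [hs5.s4.map_inf, hbf, hbf'], z.2.inf_mem b hbz b' hbz', ?_⟩
      calc (a ⊓ a') ⊓ (b ⊓ b') = (a ⊓ b) ⊓ (a' ⊓ b') := inf_inf_inf_comm a a' b b'
        _ ≤ c ⊓ d := inf_le_inf habc habd
    · rintro c ⟨a, haf, hax, b, hbf, hbz, habc⟩ d hcd
      exact ⟨a, haf, hax, b, hbf, hbz, habc.trans hcd⟩
    · rintro ⟨a, haf, hax, b, hbf, hbz, hab⟩
      have hbc : a ≤ bᶜ := by
        rw [le_compl_iff_disjoint_right]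
        exact disjoint_iff.2 (le_antisymm hab bot_le)
      have h1 : a ≤ box bᶜ := haf ▸ box_mono a bᶜ hbc
      have h2 : a ≤ fa (box bᶜ) := by
        have : box bᶜ = box (fa bᶜ) := by rw [fa_compl b hbf]
        exact h1.trans (this ▸ hcomm bᶜ)
      have hdx : fa (box bᶜ) ∈ x.1 := x.2.mem_of_le a hax _ h2
      have hdy : fa (box bᶜ) ∈ y.1 := (hxy _ (fa_idem _)).1 hdx
      have hby : box bᶜ ∈ y.1 := y.2.mem_of_le _ hdy _ (hs5.s4.le_self _)
      have hbz' : box bᶜ ∈ z.1 := hyz _ (box_idem _) hby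
      have hcz : bᶜ ∈ z.1 := z.2.mem_of_le _ hbz' _ (hs4.le_self _)
      exact (z.2.compl_mem_iff b).1 hcz hbz
  obtain ⟨u, hGu, hu⟩ := properFilter_extend G hGF
  refine ⟨⟨u, hu⟩, ?_, ?_⟩
  · intro a haf hax
    exact hGu ⟨a, haf, hax, ⊤, hs5.s4.map_top, z.2.top_mem, inf_le_left⟩
  · intro c hcf
    constructor
    · intro hcu
      by_contra hcz
      have : cᶜ ∈ u := hGu ⟨⊤, hs4.map_top, x.2.top_mem, cᶜ,
        fa_compl c hcf, (z.2.compl_mem_iff c).2 hcz, inf_le_right⟩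
      exact (hu.compl_mem_iff c).1 this hcu
    · intro hcz
      exact hGu ⟨⊤, hs4.map_top, x.2.top_mem, c, hcf, hcz, inf_le_right⟩
end

section
/- Let (B,□_F,□_P,∀) be an MS4.t-algebra and let B' be a boolean subalgebra of B that is closed under ∀ and finite. Let H_F={a∈B : □_F a=a} and H_P={a∈B : □_P a=a}, and define operations on B' by □'_F a = ⋁{b ∈ B'∩H_F : b ≤ a} and □'_P a = ⋁{b ∈ B'∩H_P : b ≤ a} (finite joins in B, which lie in B'). Then (B', □'_F, □'_P, ∀↾B') is an MS4.t-algebra. -/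
section Helpers

variable {B : Type} [BooleanAlgebra B]

lemma s4_mono {box : B → B} (h : IsS4 box) {a b : B} (hab : a ≤ b) :
    box a ≤ box b := by
  have h1 : a ⊓ b = a := inf_eq_left.mpr hab
  calc box a = box (a ⊓ b) := by rw [h1]
    _ = box a ⊓ box b := h.map_inf a b
    _ ≤ box b := inf_le_right

lemma s5_idem {fa : B → B} (h : IsS5 fa) (a : B) : fa (fa a) = fa a :=
  le_antisymm (h.s4.le_self _) (h.s4.le_idem a)

/-- `◆ a := (fa aᶜ)ᶜ` is a fixpoint of `fa` in an S5-algebra. -/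
lemma s5_fix_dia {fa : B → B} (h : IsS5 fa) (a : B) :
    fa ((fa aᶜ)ᶜ) = (fa aᶜ)ᶜ := by
  refine le_antisymm (h.s4.le_self _) ?_
  have h1 := h.sym ((fa aᶜ)ᶜ)
  have h2 : (fa (((fa aᶜ)ᶜ)ᶜ))ᶜ = (fa aᶜ)ᶜ := by
    rw [compl_compl, s5_idem h]
  rwa [h2] at h1

/-- The S5 adjunction: `b ≤ fa x ↔ ◆ b ≤ x`. -/
lemma s5_adj {fa : B → B} (h : IsS5 fa) (b x : B) :
    b ≤ fa x ↔ (fa bᶜ)ᶜ ≤ x := by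
  constructor
  · intro hb
    have hfix : fa ((fa x)ᶜ) = (fa x)ᶜ := by
      have := s5_fix_dia h xᶜ
      rwa [compl_compl] at this
    have h1 : (fa x)ᶜ ≤ fa bᶜ := by
      rw [← hfix]
      exact s4_mono h.s4 (compl_le_compl hb)
    have h2 : (fa bᶜ)ᶜ ≤ fa x := by
      have := compl_le_compl h1
      rwa [compl_compl] at this
    exact h2.trans (h.s4.le_self x)
  · intro hb
    exact (h.sym b).trans (s4_mono h.s4 hb)

lemma lub_mem_of_subset {S T : Set B} (hfin : S.Finite)
    (hbot : ⊥ ∈ S) (hsup : ∀ a ∈ S, ∀ b ∈ S, a ⊔ b ∈ S)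
    (hTS : T ⊆ S) {u : B} (hu : IsLUB T u) : u ∈ S := by
  have hT : T.Finite := hfin.subset hTS
  have hcoe : (↑hT.toFinset : Set B) = T := hT.coe_toFinset
  have hlub : IsLUB (↑hT.toFinset : Set B) (hT.toFinset.sup id) := by
    constructor
    · intro b hb
      exact Finset.le_sup (f := id) (by simpa using hb)
    · intro x hx
      exact Finset.sup_le fun b hb => hx (by simpa using hb)
  rw [← hcoe] at hu
  have heq : u = hT.toFinset.sup id := hu.unique hlub
  rw [heq]
  exact Finset.sup_induction hbot (fun a ha b hb => hsup a ha b hb)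
    (fun b hb => hTS (by simpa using hb))

/-- Basic properties of the relativized interior operator: it lands in `S`,
is a `box`-fixpoint, and is below `a`. -/
lemma prime_props {box box' : B → B} {S : Set B}
    (hs4 : IsS4 box) (hfin : S.Finite)
    (hbot : ⊥ ∈ S) (hsup : ∀ a ∈ S, ∀ b ∈ S, a ⊔ b ∈ S)
    (hb' : ∀ a ∈ S, IsLUB {b | b ∈ S ∧ box b = b ∧ b ≤ a} (box' a))
    {a : B} (ha : a ∈ S) :
    box' a ∈ S ∧ box (box' a) = box' a ∧ box' a ≤ a := by
  have hlub := hb' a ha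
  have hmem : box' a ∈ S :=
    lub_mem_of_subset hfin hbot hsup (fun b hb => hb.1) hlub
  have hle : box' a ≤ a := hlub.2 (fun b hb => hb.2.2)
  have hfix : box (box' a) = box' a := by
    refine le_antisymm (hs4.le_self _) ?_
    refine hlub.2 (fun b hb => ?_)
    have : b ≤ box' a := hlub.1 hb
    calc b = box b := hb.2.1.symm
      _ ≤ box (box' a) := s4_mono hs4 this
  exact ⟨hmem, hfix, hle⟩

end Helpers

/-- Let `(B,□_F,□_P,∀)` be an MS4.t-algebra and `S` a finite
boolean subalgebra of `B` closed under `∀`.  Define `□'_F a = ⋁{b ∈ S ∩ H_F : b ≤ a}`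
and `□'_P a = ⋁{b ∈ S ∩ H_P : b ≤ a}` (least upper bounds in `B`, where `H_F`,
`H_P` are the sets of `□_F`- and `□_P`-fixpoints).  Then `(S, □'_F, □'_P, ∀↾S)`
is an MS4.t-algebra: the new operations map `S` into `S` and all the
MS4.t-algebra axioms hold on `S`. -/

theorem finite_subalgebra_ms4t {B : Type} [BooleanAlgebra B]
    (bF bP fa : B → B) (h : IsMS4t bF bP fa)
    (S : Set B) (hfin : S.Finite)
    (hbot : ⊥ ∈ S) (htop : ⊤ ∈ S)
    (hinf : ∀ a ∈ S, ∀ b ∈ S, a ⊓ b ∈ S)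
    (hsup : ∀ a ∈ S, ∀ b ∈ S, a ⊔ b ∈ S)
    (hcompl : ∀ a ∈ S, aᶜ ∈ S)
    (hfa : ∀ a ∈ S, fa a ∈ S)
    (bF' bP' : B → B)
    (hbF' : ∀ a ∈ S, IsLUB {b | b ∈ S ∧ bF b = b ∧ b ≤ a} (bF' a))
    (hbP' : ∀ a ∈ S, IsLUB {b | b ∈ S ∧ bP b = b ∧ b ≤ a} (bP' a)) :
    (∀ a ∈ S, bF' a ∈ S) ∧ (∀ a ∈ S, bP' a ∈ S) ∧
    (∀ a ∈ S, ∀ b ∈ S, bF' (a ⊓ b) = bF' a ⊓ bF' b) ∧ bF' ⊤ = ⊤ ∧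
    (∀ a ∈ S, bF' a ≤ a) ∧ (∀ a ∈ S, bF' a ≤ bF' (bF' a)) ∧
    (∀ a ∈ S, ∀ b ∈ S, bP' (a ⊓ b) = bP' a ⊓ bP' b) ∧ bP' ⊤ = ⊤ ∧
    (∀ a ∈ S, bP' a ≤ a) ∧ (∀ a ∈ S, bP' a ≤ bP' (bP' a)) ∧
    (∀ a ∈ S, a ≤ bP' ((bF' aᶜ)ᶜ)) ∧ (∀ a ∈ S, a ≤ bF' ((bP' aᶜ)ᶜ)) ∧
    (∀ a ∈ S, ∀ b ∈ S, fa (a ⊓ b) = fa a ⊓ fa b) ∧ fa ⊤ = ⊤ ∧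
    (∀ a ∈ S, fa a ≤ a) ∧ (∀ a ∈ S, fa a ≤ fa (fa a)) ∧
    (∀ a ∈ S, a ≤ fa ((fa aᶜ)ᶜ)) ∧
    (∀ a ∈ S, bF' (fa a) ≤ fa (bF' a)) := by
  have hs4F := h.s4t.s4F
  have hs4P := h.s4t.s4P
  have hs5 := h.ms4.s5
  -- basic properties of bF' and bP'
  have hF := fun {a} (ha : a ∈ S) =>
    prime_props hs4F hfin hbot hsup hbF' ha
  have hP := fun {a} (ha : a ∈ S) =>
    prime_props hs4P hfin hbot hsup hbP' ha
  -- membership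
  have hFmem : ∀ a ∈ S, bF' a ∈ S := fun a ha => (hF ha).1
  have hPmem : ∀ a ∈ S, bP' a ∈ S := fun a ha => (hP ha).1
  -- le_self
  have hFle : ∀ a ∈ S, bF' a ≤ a := fun a ha => (hF ha).2.2
  have hPle : ∀ a ∈ S, bP' a ≤ a := fun a ha => (hP ha).2.2
  -- fixpoint complements swap between bF and bP
  have hFPswap : ∀ c : B, bF c = c → bP cᶜ = cᶜ := by
    intro c hc
    refine le_antisymm (hs4P.le_self _) ?_
    have := h.s4t.pf cᶜ
    rwa [compl_compl, hc] at this
  have hPFswap : ∀ c : B, bP c = c → bF cᶜ = cᶜ := by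
    intro c hc
    refine le_antisymm (hs4F.le_self _) ?_
    have := h.s4t.fp cᶜ
    rwa [compl_compl, hc] at this
  -- generic facts for a primed operator
  have genF_top : bF' ⊤ = ⊤ := by
    refine le_antisymm (hFle ⊤ htop) ?_
    exact (hbF' ⊤ htop).1 ⟨htop, hs4F.map_top, le_rfl⟩
  have genP_top : bP' ⊤ = ⊤ := by
    refine le_antisymm (hPle ⊤ htop) ?_
    exact (hbP' ⊤ htop).1 ⟨htop, hs4P.map_top, le_rfl⟩
  have genF_inf : ∀ a ∈ S, ∀ b ∈ S, bF' (a ⊓ b) = bF' a ⊓ bF' b := by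
    intro a ha b hb
    have hab : a ⊓ b ∈ S := hinf a ha b hb
    refine le_antisymm ?_ ?_
    · refine le_inf ?_ ?_
      · exact (hbF' a ha).1 ⟨(hF hab).1, (hF hab).2.1, (hF hab).2.2.trans inf_le_left⟩
      · exact (hbF' b hb).1 ⟨(hF hab).1, (hF hab).2.1, (hF hab).2.2.trans inf_le_right⟩
    · refine (hbF' (a ⊓ b) hab).1 ⟨hinf _ (hF ha).1 _ (hF hb).1, ?_, ?_⟩
      · rw [hs4F.map_inf, (hF ha).2.1, (hF hb).2.1]
      · exact inf_le_inf (hFle a ha) (hFle b hb)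
  have genP_inf : ∀ a ∈ S, ∀ b ∈ S, bP' (a ⊓ b) = bP' a ⊓ bP' b := by
    intro a ha b hb
    have hab : a ⊓ b ∈ S := hinf a ha b hb
    refine le_antisymm ?_ ?_
    · refine le_inf ?_ ?_
      · exact (hbP' a ha).1 ⟨(hP hab).1, (hP hab).2.1, (hP hab).2.2.trans inf_le_left⟩
      · exact (hbP' b hb).1 ⟨(hP hab).1, (hP hab).2.1, (hP hab).2.2.trans inf_le_right⟩
    · refine (hbP' (a ⊓ b) hab).1 ⟨hinf _ (hP ha).1 _ (hP hb).1, ?_, ?_⟩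
      · rw [hs4P.map_inf, (hP ha).2.1, (hP hb).2.1]
      · exact inf_le_inf (hPle a ha) (hPle b hb)
  have genF_idem : ∀ a ∈ S, bF' a ≤ bF' (bF' a) := by
    intro a ha
    exact (hbF' (bF' a) (hFmem a ha)).1 ⟨(hF ha).1, (hF ha).2.1, le_rfl⟩
  have genP_idem : ∀ a ∈ S, bP' a ≤ bP' (bP' a) := by
    intro a ha
    exact (hbP' (bP' a) (hPmem a ha)).1 ⟨(hP ha).1, (hP ha).2.1, le_rfl⟩
  -- tense axioms
  have genpf : ∀ a ∈ S, a ≤ bP' ((bF' aᶜ)ᶜ) := by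
    intro a ha
    have hac : aᶜ ∈ S := hcompl a ha
    have hm := hF hac
    have hmc : (bF' aᶜ)ᶜ ∈ S := hcompl _ hm.1
    have hfix : bP ((bF' aᶜ)ᶜ) = (bF' aᶜ)ᶜ := hFPswap _ hm.2.1
    have h1 : (bF' aᶜ)ᶜ ≤ bP' ((bF' aᶜ)ᶜ) :=
      (hbP' _ hmc).1 ⟨hmc, hfix, le_rfl⟩
    have h2 : a ≤ (bF' aᶜ)ᶜ := by
      have := compl_le_compl hm.2.2
      rwa [compl_compl] at this
    exact h2.trans h1
  have genfp : ∀ a ∈ S, a ≤ bF' ((bP' aᶜ)ᶜ) := by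
    intro a ha
    have hac : aᶜ ∈ S := hcompl a ha
    have hm := hP hac
    have hmc : (bP' aᶜ)ᶜ ∈ S := hcompl _ hm.1
    have hfix : bF ((bP' aᶜ)ᶜ) = (bP' aᶜ)ᶜ := hPFswap _ hm.2.1
    have h1 : (bP' aᶜ)ᶜ ≤ bF' ((bP' aᶜ)ᶜ) :=
      (hbF' _ hmc).1 ⟨hmc, hfix, le_rfl⟩
    have h2 : a ≤ (bP' aᶜ)ᶜ := by
      have := compl_le_compl hm.2.2
      rwa [compl_compl] at this
    exact h2.trans h1
  -- commutativity axiom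
  have gencomm : ∀ a ∈ S, bF' (fa a) ≤ fa (bF' a) := by
    intro a ha
    have hfaa : fa a ∈ S := hfa a ha
    have hm := hF hfaa
    set m := bF' (fa a) with hmdef
    -- ◆ m := (fa mᶜ)ᶜ
    set d := (fa mᶜ)ᶜ with hddef
    have hdS : d ∈ S := hcompl _ (hfa _ (hcompl _ hm.1))
    -- m ≤ fa d (the S5 symmetry axiom)
    have hmfad : m ≤ fa d := hs5.sym m
    -- d is a bF-fixpoint
    have hdfix : bF d = d := by
      refine le_antisymm (hs4F.le_self _) ?_
      have h1 : m ≤ bF (fa d) := by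
        calc m = bF m := hm.2.1.symm
          _ ≤ bF (fa d) := s4_mono hs4F hmfad
      have h2 : m ≤ fa (bF d) := h1.trans (h.ms4.comm d)
      exact (s5_adj hs5 m (bF d)).mp h2
    -- d ≤ a
    have hda : d ≤ a := (s5_adj hs5 m a).mp hm.2.2
    -- hence d ≤ bF' a
    have hdle : d ≤ bF' a := (hbF' a ha).1 ⟨hdS, hdfix, hda⟩
    calc m ≤ fa d := hmfad
      _ ≤ fa (bF' a) := s4_mono hs5.s4 hdle
  refine ⟨hFmem, hPmem, genF_inf, genF_top, hFle, genF_idem,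
    genP_inf, genP_top, hPle, genP_idem, genpf, genfp,
    fun a _ b _ => hs5.s4.map_inf a b, hs5.s4.map_top,
    fun a _ => hs5.s4.le_self a, fun a _ => hs5.s4.le_idem a,
    fun a _ => hs5.sym a, gencomm⟩
end
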